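/- arXiv:2404.13527 — 7 statements merged into one kernel-verified Lean document; each statement's English description precedes it below -/
import Mathlib

section
/- A finite simple graph G is 0-1 strongly EFX-orientable if and only if for every subgraph H of G that is a forest with connected components (trees) T_1, ..., T_k, one can choose for every i a vertex x_i in T_i such that the union over i of the neighborhoods N_H(x_i) of the x_i in H forms an independent set in G. -/
open SimpleGraph
open scoped Classical

variable {V : Type*}

def bundleSet (G : SimpleGraph V) (head : Sym2 V → V) (v : V) : Set (Sym2 V) :=
  {e ∈ G.edgeSet | head e = v}

def IsEFXOrientation (G : SimpleGraph V) (f : V → Set (Sym2 V) → NNReal)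
    (head : Sym2 V → V) : Prop :=
  (∀ e ∈ G.edgeSet, head e ∈ e) ∧
  ∀ a b : V, ∀ g ∈ bundleSet G head b,
    f a (bundleSet G head b \ {g}) ≤ f a (bundleSet G head a)

def StronglyEFXOrientable [Fintype V] (G : SimpleGraph V) : Prop :=
  ∀ f : V → Set (Sym2 V) → NNReal,
    (∀ a, Monotone (f a)) →
    (∀ a X, f a X = f a (X ∩ G.incidenceSet a)) →
    ∃ head : Sym2 V → V, IsEFXOrientation G f head

noncomputable def bundle [Fintype V] (G : SimpleGraph V) (head : Sym2 V → V) (v : V) :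
    Finset (Sym2 V) :=
  Finset.univ.filter fun e => e ∈ G.edgeSet ∧ head e = v

def IsEFX01Orientation [Fintype V] (G : SimpleGraph V) (w : V → Sym2 V → ℕ)
    (head : Sym2 V → V) : Prop :=
  (∀ e ∈ G.edgeSet, head e ∈ e) ∧
  ∀ a b : V, ∀ g ∈ bundle G head b,
    ∑ e ∈ (bundle G head b).erase g, w a e ≤ ∑ e ∈ bundle G head a, w a e

def ZeroOneStronglyEFXOrientable [Fintype V] (G : SimpleGraph V) : Prop :=
  ∀ w : V → Sym2 V → ℕ, (∀ a e, w a e ≤ 1) → (∀ a e, a ∉ e → w a e = 0) →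
    ∃ head : Sym2 V → V, IsEFX01Orientation G w head

def IndepOn (G : SimpleGraph V) (s : Set V) : Prop :=
  ∀ a ∈ s, ∀ b ∈ s, ¬ G.Adj a b

/-!
(⇒) Let every agent value exactly its incident edges of the forest `H`. In an EFX orientation
every tree of `H` has a vertex `x` receiving none of its edges (following edges backwards from
any vertex gives a path, which must stop), so `x` has value zero. Each `H`-neighbour `b` of `x`
holds the edge `bx`, which `x` values, so by EFX it holds nothing else; an edge of `G` between
two such neighbours would then have no head.

(⇐) Let `H` be the graph of edges valued by both endpoints and `F` a spanning forest of `H`; the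
hypothesis, applied to `F`, gives roots `x c` whose neighbourhoods form an independent set `S`.
Orient `F` away from its roots, where a tree that contains an endpoint `y` of an edge of `H`
outside `F` is rooted at `y` instead and the other edges of `H` point towards the roots (so `y`
receives that edge); every remaining edge goes to an endpoint outside `S`, one that values it if
possible. Every agent then owns an edge it values, except a root `x c` of a tree containing all
edges of `H` at its vertices; such a root values only its edges in `F`, and the neighbour `b ∈ S`
holding such an edge owns nothing else.
-/

namespace Sym2

variable {α : Type*} [LinearOrder α]

noncomputable def argmax (f : V → α) (e : Sym2 V) : V :=
  if f e.out.1 ≤ f e.out.2 then e.out.2 else e.out.1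

theorem argmax_mem (f : V → α) (e : Sym2 V) : argmax f e ∈ e := by
  unfold argmax; split_ifs
  exacts [out_snd_mem e, out_fst_mem e]

theorem le_argmax (f : V → α) {e : Sym2 V} {y : V} (hy : y ∈ e) : f y ≤ f (argmax f e) := by
  have he : e = s(e.out.1, e.out.2) := e.out_eq.symm
  rw [he, mem_iff] at hy
  unfold argmax; split_ifs <;> rcases hy with rfl | rfl <;> order

theorem argmax_eq_of_forall_lt {f : V → α} {e : Sym2 V} {y : V} (hy : y ∈ e)
    (h : ∀ z ∈ e, z ≠ y → f z < f y) : argmax f e = y := by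
  by_contra hne
  exact (h _ (argmax_mem f e) hne).not_ge (le_argmax f hy)

theorem argmax_mk_of_lt {f : V → α} {u v : V} (h : f u < f v) : argmax f s(u, v) = v :=
  argmax_eq_of_forall_lt (mem_mk_right u v) fun z hz hzv => by
    obtain rfl := (mem_iff.mp hz).resolve_right hzv
    exact h

end Sym2

namespace SimpleGraph

variable {G : SimpleGraph V}

theorem Reachable.exists_adj_dist_lt {u v : V} (h : G.Reachable u v) (hne : u ≠ v) :
    ∃ w, G.Adj w v ∧ G.dist u w < G.dist u v := by
  obtain ⟨p, hp⟩ := h.exists_walk_length_eq_dist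
  have hnil : ¬ p.Nil := fun hn => hne hn.eq
  refine ⟨p.penultimate, p.adj_penultimate hnil, ?_⟩
  have := Walk.length_dropLast_add_one hnil
  have := G.dist_le p.dropLast
  omega

def IsBackwardPath (head : Sym2 V → V) {v y : V} (p : G.Walk v y) : Prop :=
  p.IsPath ∧ ∀ d ∈ p.darts, head d.edge = d.fst

/-- The new neighbour `u` cannot lie on the path: in a forest it would be the predecessor of `y`,
whose edge points the other way. -/
theorem IsAcyclic.exists_isBackwardPath_succ (hG : G.IsAcyclic) {head : Sym2 V → V} {v y u : V}
    {p : G.Walk v y} (hp : IsBackwardPath head p) (hadj : G.Adj u y) (hhead : head s(u, y) = y) :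
    ∃ q : G.Walk v u, IsBackwardPath head q ∧ q.length = p.length + 1 := by
  have hu : u ∉ p.support := by
    intro hu
    have hnil : ¬ p.Nil := fun hn =>
      hadj.ne (by simpa [Walk.nil_iff_support_eq.mp hn, hn.eq] using hu)
    have hpen := hG.eq_penultimate_of_adj_end hp.1 hadj.symm hu
    have := hp.2 _ (p.lastDart_mem_darts hnil)
    simp only [Walk.lastDart, Dart.edge_mk, ← hpen, hhead] at this
    exact hadj.ne this.symm
  refine ⟨p.concat hadj.symm, ⟨hp.1.concat hu hadj.symm, ?_⟩, p.length_concat _⟩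
  intro d hd
  simp only [Walk.darts_concat, List.concat_eq_append, List.mem_append, List.mem_singleton] at hd
  rcases hd with hd | rfl
  · exact hp.2 d hd
  · simpa [Sym2.eq_swap] using hhead

theorem IsAcyclic.exists_reachable_forall_head_ne [Fintype V] (hG : G.IsAcyclic)
    (head : Sym2 V → V) (v : V) :
    ∃ x, G.Reachable v x ∧ ∀ u, G.Adj u x → head s(u, x) ≠ x := by
  by_contra! hcon
  have hlong : ∀ n, ∃ y, ∃ p : G.Walk v y, IsBackwardPath head p ∧ p.length = n := by
    intro n
    induction n with
    | zero => exact ⟨v, .nil, ⟨.nil, by simp⟩, rfl⟩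
    | succ n ih =>
      obtain ⟨y, p, hp, rfl⟩ := ih
      obtain ⟨u, hadj, hhead⟩ := hcon y p.reachable
      exact ⟨u, hG.exists_isBackwardPath_succ hp hadj hhead⟩
  obtain ⟨y, p, hp, hlen⟩ := hlong (Fintype.card V)
  exact hp.1.length_lt.ne hlen

theorem notMem_iUnion_neighborSet {x : G.ConnectedComponent → V}
    (hx : ∀ c, G.connectedComponentMk (x c) = c) (c : G.ConnectedComponent) :
    x c ∉ ⋃ c', G.neighborSet (x c') := by
  simp only [Set.mem_iUnion, mem_neighborSet, not_exists]
  intro c' hadj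
  have hc : c' = c := by rw [← hx c', ← hx c]; exact ConnectedComponent.sound hadj.reachable
  exact G.irrefl (hc ▸ hadj)

section Depth

variable {F : SimpleGraph V} {root : F.ConnectedComponent → V}

noncomputable def depth (F : SimpleGraph V) (root : F.ConnectedComponent → V) (v : V) : ℕ :=
  F.dist (root (F.connectedComponentMk v)) v

theorem reachable_root (hroot : ∀ c, F.connectedComponentMk (root c) = c) (v : V) :
    F.Reachable (root (F.connectedComponentMk v)) v :=
  ConnectedComponent.exact (hroot _)

theorem depth_eq_zero_iff (hroot : ∀ c, F.connectedComponentMk (root c) = c) {v : V} :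
    depth F root v = 0 ↔ root (F.connectedComponentMk v) = v :=
  (reachable_root hroot v).dist_eq_zero_iff

theorem depth_of_adj {u v : V} (h : F.Adj u v) :
    depth F root u = F.dist (root (F.connectedComponentMk v)) u := by
  rw [depth, ConnectedComponent.connectedComponentMk_eq_of_adj h]

theorem exists_adj_depth_lt (hroot : ∀ c, F.connectedComponentMk (root c) = c) {v : V}
    (hv : root (F.connectedComponentMk v) ≠ v) :
    ∃ u, F.Adj u v ∧ depth F root u < depth F root v := by
  obtain ⟨u, hadj, hlt⟩ := (reachable_root hroot v).exists_adj_dist_lt hv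
  exact ⟨u, hadj, by rwa [depth_of_adj hadj]⟩

theorem IsAcyclic.depth_ne_of_adj (hF : F.IsAcyclic)
    (hroot : ∀ c, F.connectedComponentMk (root c) = c) {u v : V} (h : F.Adj u v) :
    depth F root u ≠ depth F root v := by
  rw [depth_of_adj h]
  exact hF.dist_ne_of_adj h ((reachable_root hroot v).trans h.symm.reachable)

end Depth

end SimpleGraph

section Bundle

variable [Fintype V] {G : SimpleGraph V} {head : Sym2 V → V} {w : V → Sym2 V → ℕ}

@[simp]
theorem mem_bundle {v : V} {e : Sym2 V} : e ∈ bundle G head v ↔ e ∈ G.edgeSet ∧ head e = v := by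
  simp [bundle]

theorem eq_of_mem_bundle (hhead : ∀ e ∈ G.edgeSet, head e ∈ e) {a b : V} {e : Sym2 V}
    (hab : a ≠ b) (ha : a ∈ e) (he : e ∈ bundle G head b) : e = s(a, b) := by
  obtain ⟨heG, rfl⟩ := mem_bundle.mp he
  exact (Sym2.mem_and_mem_iff hab).mp ⟨ha, hhead e heG⟩

theorem sum_le_one_of_subset_bundle (hhead : ∀ e ∈ G.edgeSet, head e ∈ e)
    (hw1 : ∀ a e, w a e ≤ 1) (hw0 : ∀ a e, a ∉ e → w a e = 0) {a b : V} (hab : a ≠ b)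
    {s : Finset (Sym2 V)} (hs : s ⊆ bundle G head b) : ∑ e ∈ s, w a e ≤ 1 :=
  calc ∑ e ∈ s, w a e
      ≤ ∑ e ∈ {s(a, b)}, w a e := Finset.sum_le_sum_of_ne_zero fun e he hwe =>
        Finset.mem_singleton.mpr <|
          eq_of_mem_bundle hhead hab (by_contra fun ha => hwe (hw0 a e ha)) (hs he)
    _ ≤ 1 := by simpa using hw1 a s(a, b)

/-- Since `a` values at most one good of another bundle, EFX can only fail for an agent of value
zero, against a bundle holding a good besides the one it values. -/
theorem isEFX01Orientation_of_forall (hhead : ∀ e ∈ G.edgeSet, head e ∈ e)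
    (hw1 : ∀ a e, w a e ≤ 1) (hw0 : ∀ a e, a ∉ e → w a e = 0)
    (h : ∀ a b, a ≠ b → ∀ e ∈ bundle G head b, w a e = 1 →
      (∃ e' ∈ bundle G head a, w a e' = 1) ∨ bundle G head b ⊆ {e}) :
    IsEFX01Orientation G w head := by
  refine ⟨hhead, fun a b g hg => ?_⟩
  obtain rfl | hab := eq_or_ne a b
  · exact Finset.sum_le_sum_of_subset (Finset.erase_subset _ _)
  by_cases hval : ∃ e ∈ (bundle G head b).erase g, w a e = 1
  · obtain ⟨e, he, hwe⟩ := hval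
    rcases h a b hab e (Finset.mem_of_mem_erase he) hwe with ⟨e', he', hwe'⟩ | hsub
    · calc ∑ e ∈ (bundle G head b).erase g, w a e
          ≤ 1 := sum_le_one_of_subset_bundle hhead hw1 hw0 hab (Finset.erase_subset _ _)
        _ = w a e' := hwe'.symm
        _ ≤ ∑ e ∈ bundle G head a, w a e := Finset.single_le_sum (fun _ _ => Nat.zero_le _) he'
    · exact absurd (Finset.mem_singleton.mp (hsub hg)).symm (Finset.ne_of_mem_erase he)
  · push Not at hval
    have hzero : ∑ e ∈ (bundle G head b).erase g, w a e = 0 :=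
      Finset.sum_eq_zero fun e he => by have := hw1 a e; have := hval e he; omega
    exact hzero ▸ Nat.zero_le _

end Bundle

noncomputable def incidenceValuation (H : SimpleGraph V) (a : V) (e : Sym2 V) : ℕ :=
  if e ∈ H.incidenceSet a then 1 else 0

section Forward

variable [Fintype V] {G H : SimpleGraph V} {head : Sym2 V → V}

theorem bundle_subset_of_forall_head_ne (hHG : H ≤ G)
    (hefx : IsEFX01Orientation G (incidenceValuation H) head) {x b : V}
    (hx : ∀ u, H.Adj u x → head s(u, x) ≠ x) (hxb : H.Adj x b) :
    bundle G head b ⊆ {s(x, b)} := by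
  have hxbG : s(x, b) ∈ G.edgeSet := hHG hxb
  have hhead : head s(x, b) = b := by
    rcases Sym2.mem_iff.mp (hefx.1 _ hxbG) with h | h
    · exact absurd (by rwa [Sym2.eq_swap]) (hx b hxb.symm)
    · exact h
  have hzero : ∑ e ∈ bundle G head x, incidenceValuation H x e = 0 := by
    refine Finset.sum_eq_zero fun e he => if_neg fun hinc => ?_
    obtain ⟨u, rfl⟩ := Sym2.mem_iff_exists.mp hinc.2
    exact hx u ((mem_incidenceSet _ _ _).mp hinc).symm
      (by rw [Sym2.eq_swap]; exact (mem_bundle.mp he).2)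
  intro g hg
  by_contra hne
  have hmem : s(x, b) ∈ (bundle G head b).erase g := Finset.mem_erase.mpr
    ⟨fun h => hne (Finset.mem_singleton.mpr h.symm), mem_bundle.mpr ⟨hxbG, hhead⟩⟩
  have hone : incidenceValuation H x s(x, b) = 1 := if_pos ((mem_incidenceSet _ _ _).mpr hxb)
  have := (Finset.single_le_sum (fun _ _ => Nat.zero_le _) hmem).trans (hefx.2 x b g hg)
  omega

theorem exists_roots_of_zeroOneStronglyEFXOrientable (hG : ZeroOneStronglyEFXOrientable G)
    (hHG : H ≤ G) (hH : H.IsAcyclic) :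
    ∃ x : H.ConnectedComponent → V, (∀ c, H.connectedComponentMk (x c) = c) ∧
      IndepOn G (⋃ c, H.neighborSet (x c)) := by
  obtain ⟨head, hefx⟩ := hG (incidenceValuation H)
    (fun a e => by unfold incidenceValuation; split_ifs <;> simp)
    (fun a e ha => if_neg fun h => ha h.2)
  have hsink : ∀ c : H.ConnectedComponent, ∃ x, H.connectedComponentMk x = c ∧
      ∀ u, H.Adj u x → head s(u, x) ≠ x := fun c => by
    obtain ⟨x, hreach, hx⟩ := hH.exists_reachable_forall_head_ne head c.out
    exact ⟨x, (ConnectedComponent.sound hreach).symm.trans c.out_eq, hx⟩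
  choose x hxc hx using hsink
  refine ⟨x, hxc, fun a ha b hb hab => ?_⟩
  obtain ⟨c, hca⟩ := Set.mem_iUnion.mp ha
  obtain ⟨c', hcb⟩ := Set.mem_iUnion.mp hb
  have hsub := fun c b (h : H.Adj (x c) b) => bundle_subset_of_forall_head_ne hHG hefx (hx c) h
  rcases Sym2.mem_iff.mp (hefx.1 _ hab) with h | h
  · have := Finset.mem_singleton.mp (hsub c a hca (mem_bundle.mpr ⟨hab, h⟩))
    obtain rfl : b = x c := by grind
    exact notMem_iUnion_neighborSet hxc c hb
  · have := Finset.mem_singleton.mp (hsub c' b hcb (mem_bundle.mpr ⟨hab, h⟩))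
    obtain rfl : a = x c' := by grind
    exact notMem_iUnion_neighborSet hxc c' ha

end Forward

def contestedGraph (G : SimpleGraph V) (w : V → Sym2 V → ℕ) : SimpleGraph V where
  Adj u v := G.Adj u v ∧ w u s(u, v) = 1 ∧ w v s(u, v) = 1
  symm := ⟨fun _ _ ⟨h, hu, hv⟩ => ⟨h.symm, by rwa [Sym2.eq_swap], by rwa [Sym2.eq_swap]⟩⟩
  loopless := ⟨fun _ h => G.irrefl h.1⟩

theorem contestedGraph_le (G : SimpleGraph V) (w : V → Sym2 V → ℕ) : contestedGraph G w ≤ G :=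
  fun _ _ h => h.1

section Converse

open Sym2

/-- The score by which an uncontested edge, valued `g v` by its endpoints `v`, picks its head:
an endpoint outside `S` if possible, and then one that values it. -/
noncomputable def preference (S : Set V) (g : V → ℕ) (v : V) : ℕ :=
  (if v ∈ S then 0 else 2) + g v

theorem argmax_preference_notMem {S : Set V} {g : V → ℕ} (hg : ∀ v, g v ≤ 1) {e : Sym2 V}
    {y : V} (hy : y ∈ e) (hyS : y ∉ S) : argmax (preference S g) e ∉ S := by
  intro hmem
  have hle := le_argmax (preference S g) hy
  have := hg (argmax (preference S g) e)
  simp only [preference, if_pos hmem, if_neg hyS] at hle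
  omega

theorem argmax_preference_eq {S : Set V} {g : V → ℕ} (hg : ∀ v, g v ≤ 1) {e : Sym2 V}
    {y : V} (hy : y ∈ e) (hyS : y ∉ S) (hgy : g y = 1) (hother : ∀ z ∈ e, z ≠ y → g z ≠ 1) :
    argmax (preference S g) e = y :=
  argmax_eq_of_forall_lt hy fun z hz hzy => by
    have := hg z
    have := hother z hz hzy
    simp only [preference, if_neg hyS, hgy]
    split_ifs <;> omega

variable {G F : SimpleGraph V} {w : V → Sym2 V → ℕ}

noncomputable def contestedOrientation (G F : SimpleGraph V) (w : V → Sym2 V → ℕ) (d : V → ℕ)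
    (S : Set V) (e : Sym2 V) : V :=
  if e ∈ F.edgeSet then argmax d e
  else if e ∈ (contestedGraph G w).edgeSet then argmax (fun v => OrderDual.toDual (d v)) e
  else argmax (preference S (w · e)) e

theorem contestedOrientation_mem (d : V → ℕ) (S : Set V) (e : Sym2 V) :
    contestedOrientation G F w d S e ∈ e := by
  unfold contestedOrientation; split_ifs <;> exact argmax_mem _ e

section Orientation

variable {d : V → ℕ} {S : Set V} {u v : V}

theorem contestedOrientation_of_adj (h : F.Adj u v) :
    contestedOrientation G F w d S s(u, v) = argmax d s(u, v) := by
  simp only [contestedOrientation, mem_edgeSet, if_pos h]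

theorem contestedOrientation_of_not_adj_of_adj (hF : ¬ F.Adj u v)
    (h : (contestedGraph G w).Adj u v) :
    contestedOrientation G F w d S s(u, v) = argmax (fun v => OrderDual.toDual (d v)) s(u, v) := by
  simp only [contestedOrientation, mem_edgeSet, if_neg hF, if_pos h]

theorem contestedOrientation_of_not_adj (hFH : F ≤ contestedGraph G w)
    (h : ¬ (contestedGraph G w).Adj u v) :
    contestedOrientation G F w d S s(u, v) = argmax (preference S (w · s(u, v))) s(u, v) := by
  have hF : ¬ F.Adj u v := fun hF => h (hFH hF)
  simp only [contestedOrientation, mem_edgeSet, if_neg hF, if_neg h]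

end Orientation

variable {root : F.ConnectedComponent → V} {S : Set V}

theorem exists_adj_contestedOrientation_eq (hroot : ∀ c, F.connectedComponentMk (root c) = c)
    {v : V} (hv : root (F.connectedComponentMk v) ≠ v) :
    ∃ u, F.Adj u v ∧ contestedOrientation G F w (depth F root) S s(u, v) = v := by
  obtain ⟨u, hadj, hlt⟩ := exists_adj_depth_lt hroot hv
  refine ⟨u, hadj, ?_⟩
  rw [contestedOrientation_of_adj hadj]
  exact argmax_mk_of_lt hlt

theorem contestedOrientation_eq_root (hroot : ∀ c, F.connectedComponentMk (root c) = c)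
    (hreach : F.Reachable = (contestedGraph G w).Reachable) {y z : V}
    (hy : root (F.connectedComponentMk y) = y) (hyz : (contestedGraph G w).Adj y z)
    (hF : ¬ F.Adj y z) : contestedOrientation G F w (depth F root) S s(y, z) = y := by
  have hreach_yz : F.Reachable y z := hreach ▸ hyz.reachable
  have hdepth : depth F root y < depth F root z := by
    rw [(depth_eq_zero_iff hroot).mpr hy, depth, ← ConnectedComponent.sound hreach_yz, hy]
    exact hreach_yz.pos_dist_of_ne hyz.ne
  rw [eq_swap, contestedOrientation_of_not_adj_of_adj (fun h => hF h.symm) hyz.symm]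
  exact argmax_mk_of_lt (OrderDual.toDual_lt_toDual.mpr hdepth)

theorem bundle_subset_of_adj_root [Fintype V] (hFH : F ≤ contestedGraph G w) (hF : F.IsAcyclic)
    (hroot : ∀ c, F.connectedComponentMk (root c) = c) (hw1 : ∀ a e, w a e ≤ 1)
    (hS : IndepOn G S) {b : V} (hb : F.Adj (root (F.connectedComponentMk b)) b) (hbS : b ∈ S)
    (htree : ∀ z, (contestedGraph G w).Adj b z → F.Adj b z) :
    bundle G (contestedOrientation G F w (depth F root) S) b ⊆
      {s(root (F.connectedComponentMk b), b)} := by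
  intro e he
  obtain ⟨heG, hhead⟩ := mem_bundle.mp he
  obtain ⟨y, rfl⟩ := mem_iff_exists.mp (hhead ▸ contestedOrientation_mem _ S e)
  by_cases hH : (contestedGraph G w).Adj b y
  · have hby := htree y hH
    rw [contestedOrientation_of_adj hby] at hhead
    have hle := hhead ▸ le_argmax (depth F root) (mem_mk_right b y)
    have hne := hF.depth_ne_of_adj hroot hby
    have hb1 : depth F root b = 1 := dist_eq_one_iff_adj.mpr hb
    have hy : root (F.connectedComponentMk y) = y := (depth_eq_zero_iff hroot).mp (by omega)
    rw [ConnectedComponent.connectedComponentMk_eq_of_adj hby, hy, eq_swap]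
    exact Finset.mem_singleton_self _
  · rw [contestedOrientation_of_not_adj hFH hH] at hhead
    exact absurd (hhead ▸ hbS) <| argmax_preference_notMem (fun v => hw1 v _) (mem_mk_right b y)
      fun hyS => hS b hbS y hyS heG

/-- An edge that the root `a` values lies in `F`, since otherwise `a ∉ S` would receive it; so
its head `b` is a child of `a`, which owns nothing else. -/
theorem bundle_subset_of_valued_by_root [Fintype V] (hFH : F ≤ contestedGraph G w)
    (hF : F.IsAcyclic) (hroot : ∀ c, F.connectedComponentMk (root c) = c)
    (hw1 : ∀ a e, w a e ≤ 1) (hw0 : ∀ a e, a ∉ e → w a e = 0) (hS : IndepOn G S) {a b : V}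
    (ha : root (F.connectedComponentMk a) = a) (haS : a ∉ S) (hSa : ∀ b, F.Adj a b → b ∈ S)
    (htree : ∀ y z, F.connectedComponentMk y = F.connectedComponentMk a →
      (contestedGraph G w).Adj y z → F.Adj y z)
    (hab : a ≠ b) {e : Sym2 V} (he : e ∈ bundle G (contestedOrientation G F w (depth F root) S) b)
    (hwe : w a e = 1) : bundle G (contestedOrientation G F w (depth F root) S) b ⊆ {e} := by
  obtain ⟨heG, heb⟩ := mem_bundle.mp he
  obtain rfl : e = s(a, b) := eq_of_mem_bundle (fun e _ => contestedOrientation_mem _ S e) hab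
    (by_contra fun h => by simp [hw0 a e h] at hwe) he
  have hFab : F.Adj a b := htree a b rfl <| by
    by_contra hH
    rw [contestedOrientation_of_not_adj hFH hH, argmax_preference_eq (fun v => hw1 v _)
      (mem_mk_left a b) haS hwe ?_] at heb
    exacts [hab heb, fun z hz hza hwz => hH ⟨heG, hwe, (mem_iff.mp hz).resolve_left hza ▸ hwz⟩]
  have hmk := ConnectedComponent.connectedComponentMk_eq_of_adj hFab
  have hrootb : root (F.connectedComponentMk b) = a := hmk ▸ ha
  have hsub := bundle_subset_of_adj_root hFH hF hroot hw1 hS (b := b) (by rwa [hrootb])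
    (hSa b hFab) (fun z => htree b z hmk.symm)
  rwa [hrootb] at hsub

/-- A component of `F` containing an endpoint `y` of an edge of `H` outside `F` is rooted at `y`,
so that `y` receives that edge. -/
noncomputable def chooseRoot (H F : SimpleGraph V) (x : F.ConnectedComponent → V)
    (c : F.ConnectedComponent) : V :=
  if h : ∃ y z, F.connectedComponentMk y = c ∧ H.Adj y z ∧ ¬ F.Adj y z then h.choose else x c

section ChooseRoot

variable {H : SimpleGraph V} {x : F.ConnectedComponent → V} {c : F.ConnectedComponent}

theorem connectedComponentMk_chooseRoot (hx : ∀ c, F.connectedComponentMk (x c) = c)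
    (c : F.ConnectedComponent) : F.connectedComponentMk (chooseRoot H F x c) = c := by
  unfold chooseRoot
  split_ifs with h
  exacts [h.choose_spec.choose_spec.1, hx c]

theorem exists_adj_chooseRoot
    (h : ∃ y z, F.connectedComponentMk y = c ∧ H.Adj y z ∧ ¬ F.Adj y z) :
    ∃ z, H.Adj (chooseRoot H F x c) z ∧ ¬ F.Adj (chooseRoot H F x c) z := by
  rw [chooseRoot, dif_pos h]
  exact h.choose_spec.imp fun _ hz => hz.2

theorem chooseRoot_of_not_exists
    (h : ¬ ∃ y z, F.connectedComponentMk y = c ∧ H.Adj y z ∧ ¬ F.Adj y z) :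
    chooseRoot H F x c = x c :=
  dif_neg h

end ChooseRoot

theorem exists_isEFX01Orientation_of_spanningForest [Fintype V] (hw1 : ∀ a e, w a e ≤ 1)
    (hw0 : ∀ a e, a ∉ e → w a e = 0) (hFH : F ≤ contestedGraph G w) (hF : F.IsAcyclic)
    (hreach : F.Reachable = (contestedGraph G w).Reachable) {x : F.ConnectedComponent → V}
    (hx : ∀ c, F.connectedComponentMk (x c) = c) (hS : IndepOn G (⋃ c, F.neighborSet (x c))) :
    ∃ head, IsEFX01Orientation G w head := by
  set H := contestedGraph G w
  set S := ⋃ c, F.neighborSet (x c)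
  set root := chooseRoot H F x
  have hroot := connectedComponentMk_chooseRoot (H := H) hx
  refine ⟨contestedOrientation G F w (depth F root) S, isEFX01Orientation_of_forall (fun e _ => contestedOrientation_mem _ _ e) hw1 hw0
    fun a b hab e he hwe => ?_⟩
  by_cases ha : root (F.connectedComponentMk a) ≠ a
  · obtain ⟨u, hua, hu⟩ := exists_adj_contestedOrientation_eq hroot ha
    exact .inl ⟨s(u, a), mem_bundle.mpr ⟨(hFH hua).1, hu⟩, (hFH hua).2.2⟩
  push Not at ha
  by_cases hext : ∃ y z, F.connectedComponentMk y = F.connectedComponentMk a ∧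
      H.Adj y z ∧ ¬ F.Adj y z
  · obtain ⟨z, hyz, hFyz⟩ := exists_adj_chooseRoot (x := x) hext
    change chooseRoot H F x _ = a at ha
    rw [ha] at hyz hFyz
    exact .inl ⟨s(a, z), mem_bundle.mpr
      ⟨hyz.1, contestedOrientation_eq_root hroot hreach ha hyz hFyz⟩, hyz.2.1⟩
  have hax : x (F.connectedComponentMk a) = a := (chooseRoot_of_not_exists hext).symm.trans ha
  exact .inr <| bundle_subset_of_valued_by_root hFH hF hroot hw1 hw0 hS ha
    (hax ▸ notMem_iUnion_neighborSet hx _) (fun b hb => Set.mem_iUnion.mpr ⟨_, by rwa [hax]⟩)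
    (fun y z hy hyz => by_contra fun hFyz => hext ⟨y, z, hy, hyz, hFyz⟩) hab he hwe

end Converse

/-- A finite simple graph `G` is 0-1 strongly EFX-orientable iff for every
forest subgraph `H ⊆ G`, one can pick a vertex `x c` in each connected component `c` of `H`
such that the union of the `H`-neighborhoods of the chosen vertices is independent in `G`. -/
theorem zeroOne_stronglyEFXOrientable_iff [Fintype V] (G : SimpleGraph V) :
    ZeroOneStronglyEFXOrientable G ↔
      ∀ H : SimpleGraph V, H ≤ G → H.IsAcyclic →
        ∃ x : H.ConnectedComponent → V,
          (∀ c, H.connectedComponentMk (x c) = c) ∧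
          IndepOn G (⋃ c, H.neighborSet (x c)) := by
  refine ⟨fun hG H => exists_roots_of_zeroOneStronglyEFXOrientable hG, fun hroots w hw1 hw0 => ?_⟩
  obtain ⟨F, hFH, hF, hreach⟩ := (contestedGraph G w).exists_isAcyclic_reachable_eq_le
  obtain ⟨x, hx, hS⟩ := hroots F (hFH.trans (contestedGraph_le G w)) hF
  exact exists_isEFX01Orientation_of_spanningForest hw1 hw0 hFH hF hreach hx hS
end

section
/- Let G be a finite simple graph that violates the matching condition, i.e., there exists a matching M in G such that the subgraph induced by the vertices covered by M contains no independent set of size |M|. Let G' be obtained from G by subdividing any one edge of G twice (replacing an edge uv by a path u–x_1–x_2–v through two new vertices x_1, x_2). Then G' also violates the matching condition: there is a matching M' in G' such that the subgraph of G' induced by the vertices covered by M' contains no independent set of size |M'|. -/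
open SimpleGraph
open scoped Classical

variable {V : Type*}

/-- A matching: a set of edges of `G` that are pairwise vertex-disjoint. -/
def IsMatchingSet (G : SimpleGraph V) (M : Finset (Sym2 V)) : Prop :=
  (∀ e ∈ M, e ∈ G.edgeSet) ∧
  ∀ e ∈ M, ∀ f ∈ M, e ≠ f → ∀ v : V, ¬(v ∈ e ∧ v ∈ f)

/-- The matching condition: every matching `M` admits an independent set of size `|M|`
inside the subgraph induced by the vertices covered by `M`. -/
def MatchingCondition (G : SimpleGraph V) : Prop :=
  ∀ M : Finset (Sym2 V), IsMatchingSet G M →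
    ∃ I : Finset V, I.card = M.card ∧ (∀ x ∈ I, ∃ e ∈ M, x ∈ e) ∧
      ∀ a ∈ I, ∀ b ∈ I, ¬ G.Adj a b

/-- The graph obtained from `G` by subdividing the edge `uv` twice: delete `uv`, add two new
vertices `x₁ = Sum.inr 0` and `x₂ = Sum.inr 1`, and add the edges `u x₁`, `x₁ x₂`, `x₂ v`. -/
def subdivideTwice (G : SimpleGraph V) (u v : V) : SimpleGraph (V ⊕ Fin 2) :=
  SimpleGraph.fromEdgeSet
    ((Sym2.map Sum.inl '' (G.edgeSet \ {s(u, v)})) ∪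
      {s(Sum.inl u, Sum.inr 0), s(Sum.inr 0, Sum.inr 1), s(Sum.inr 1, Sum.inl v)})

/-! If `M` is a matching of `G` whose covered vertices contain no independent set of size `|M|`,
enlarge it to a matching `M'` of `G'` with `|M'| = |M| + 1` that covers no further original
vertex: add the middle edge `x₁x₂` if `uv ∉ M`, and replace `uv` by `ux₁` and `x₂v` if `uv ∈ M`.
An independent set `I'` of `G'` covered by `M'` contains at most one of `x₁, x₂`, and its original
vertices are independent in `G` except possibly for the pair `u, v`. Since `x₁ ∈ I'` excludes `u`
and `x₂ ∈ I'` excludes `v`, and otherwise we may drop `v`, this leaves an independent set of `G`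
of size at least `|I'| - 1` covered by `M`; hence `|I'| ≤ |M|`. -/

open Finset

variable {W : Type*}

def coveredVerts (M : Finset (Sym2 V)) : Set V := {x | ∃ e ∈ M, x ∈ e}

section coveredVerts

variable {M N : Finset (Sym2 V)}

lemma coveredVerts_mono (h : M ⊆ N) : coveredVerts M ⊆ coveredVerts N :=
  fun _ ⟨e, he, hx⟩ => ⟨e, h he, hx⟩

lemma coveredVerts_singleton (a b : V) : coveredVerts {s(a, b)} = {a, b} := by
  ext x; simp [coveredVerts]

lemma coveredVerts_map (f : V ↪ W) (M : Finset (Sym2 V)) :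
    coveredVerts (M.map f.sym2Map) = f '' coveredVerts M := by
  ext x
  simp only [coveredVerts, mem_map, Function.Embedding.sym2Map_apply, Set.mem_ofPred_eq,
    Set.mem_image]
  aesop

variable [DecidableEq V]

lemma coveredVerts_union : coveredVerts (M ∪ N) = coveredVerts M ∪ coveredVerts N := by
  ext x; simp only [coveredVerts, mem_union, Set.mem_ofPred_eq, Set.mem_union]; aesop

lemma card_union_of_disjoint_coveredVerts (h : Disjoint (coveredVerts M) (coveredVerts N)) :
    (M ∪ N).card = M.card + N.card :=
  card_union_of_disjoint <| disjoint_left.2 fun e hM hN =>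
    Set.disjoint_left.1 h ⟨e, hM, Sym2.out_fst_mem e⟩ ⟨e, hN, Sym2.out_fst_mem e⟩

end coveredVerts

namespace IsMatchingSet

variable {G : SimpleGraph V} {M N : Finset (Sym2 V)}

lemma singleton {a b : V} (h : G.Adj a b) : IsMatchingSet G {s(a, b)} :=
  ⟨by simpa using h, by simp⟩

lemma map {H : SimpleGraph W} (hM : IsMatchingSet G M) (f : G ↪g H) :
    IsMatchingSet H (M.map f.toEmbedding.sym2Map) := by
  refine ⟨fun e he => ?_, fun e he e' he' hne x ⟨hx, hx'⟩ => ?_⟩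
  · obtain ⟨e₀, he₀, rfl⟩ := mem_map.1 he
    exact f.toHom.map_mem_edgeSet (hM.1 e₀ he₀)
  · obtain ⟨e₀, he₀, rfl⟩ := mem_map.1 he
    obtain ⟨e₀', he₀', rfl⟩ := mem_map.1 he'
    obtain ⟨a, ha, rfl⟩ := Sym2.mem_map.1 hx
    obtain ⟨b, hb, hba⟩ := Sym2.mem_map.1 hx'
    obtain rfl := f.injective hba
    exact hM.2 e₀ he₀ e₀' he₀' (fun h => hne (h ▸ rfl)) b ⟨ha, hb⟩

variable [DecidableEq V]

lemma union (hM : IsMatchingSet G M) (hN : IsMatchingSet G N)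
    (h : Disjoint (coveredVerts M) (coveredVerts N)) : IsMatchingSet G (M ∪ N) := by
  refine ⟨fun e he => (mem_union.1 he).elim (hM.1 e) (hN.1 e), fun e he f hf hef x ⟨hxe, hxf⟩ => ?_⟩
  rcases mem_union.1 he with he | he <;> rcases mem_union.1 hf with hf | hf
  · exact hM.2 e he f hf hef x ⟨hxe, hxf⟩
  · exact Set.disjoint_left.1 h ⟨e, he, hxe⟩ ⟨f, hf, hxf⟩
  · exact Set.disjoint_left.1 h ⟨f, hf, hxf⟩ ⟨e, he, hxe⟩
  · exact hN.2 e he f hf hef x ⟨hxe, hxf⟩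

lemma erase_deleteEdges (hM : IsMatchingSet G M) (e : Sym2 V) :
    IsMatchingSet (G.deleteEdges {e}) (M.erase e) := by
  refine ⟨fun f hf => ?_, fun f hf g hg => hM.2 f (mem_of_mem_erase hf) g (mem_of_mem_erase hg)⟩
  rw [edgeSet_deleteEdges]
  exact ⟨hM.1 f (mem_of_mem_erase hf), ne_of_mem_erase hf⟩

lemma notMem_coveredVerts_erase (hM : IsMatchingSet G M) {e : Sym2 V} (he : e ∈ M) {x : V}
    (hx : x ∈ e) : x ∉ coveredVerts (M.erase e) :=
  fun ⟨f, hf, hxf⟩ => hM.2 f (mem_of_mem_erase hf) e he (ne_of_mem_erase hf) x ⟨hxf, hx⟩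

end IsMatchingSet

lemma matchingCondition_iff {G : SimpleGraph V} : MatchingCondition G ↔
    ∀ M, IsMatchingSet G M →
      ∃ I : Finset V, ↑I ⊆ coveredVerts M ∧ G.IsIndepSet I ∧ M.card ≤ I.card := by
  refine forall₂_congr fun M _ => ⟨?_, ?_⟩
  · rintro ⟨I, hcard, hcov, hI⟩
    exact ⟨I, hcov, fun a ha b hb _ => hI a ha b hb, hcard.ge⟩
  · rintro ⟨I, hcov, hI, hcard⟩
    obtain ⟨J, hJI, hJ⟩ := exists_subset_card_eq hcard
    refine ⟨J, hJ, fun x hx => hcov (hJI hx), fun a ha b hb => ?_⟩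
    rcases eq_or_ne a b with rfl | hab
    · exact G.irrefl
    · exact hI (hJI ha) (hJI hb) hab

lemma isIndepSet_of_deleteEdges {G : SimpleGraph V} {s : Set V} {u v : V}
    (h : (G.deleteEdges {s(u, v)}).IsIndepSet s) (huv : u ∉ s ∨ v ∉ s) : G.IsIndepSet s := by
  intro a ha b hb hab hadj
  refine h ha hb hab (deleteEdges_adj.2 ⟨hadj, fun he => ?_⟩)
  rcases Sym2.eq_iff.1 he with ⟨rfl, rfl⟩ | ⟨rfl, rfl⟩ <;> tauto

section subdivideTwice

variable (G : SimpleGraph V) (u v : V)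

lemma subdivideTwice_adj_inl {a b : V} :
    (subdivideTwice G u v).Adj (Sum.inl a) (Sum.inl b) ↔ (G.deleteEdges {s(u, v)}).Adj a b := by
  have hmap : ∀ e : Sym2 V, Sym2.map Sum.inl e = s(Sum.inl a, (Sum.inl b : V ⊕ Fin 2)) ↔
      e = s(a, b) := fun e => by
    rw [← Sym2.map_mk]; exact (Sym2.map.injective Sum.inl_injective).eq_iff
  simpa [subdivideTwice, hmap] using fun h _ _ => h.ne

lemma subdivideTwice_adj_inl_inr_zero : (subdivideTwice G u v).Adj (Sum.inl u) (Sum.inr 0) := by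
  simp [subdivideTwice]

lemma subdivideTwice_adj_inr_zero_inr_one : (subdivideTwice G u v).Adj (Sum.inr 0) (Sum.inr 1) := by
  simp [subdivideTwice]

lemma subdivideTwice_adj_inr_one_inl : (subdivideTwice G u v).Adj (Sum.inr 1) (Sum.inl v) := by
  simp [subdivideTwice]

def subdivideTwiceInl : G.deleteEdges {s(u, v)} ↪g subdivideTwice G u v where
  toEmbedding := Function.Embedding.inl
  map_rel_iff' := subdivideTwice_adj_inl G u v

variable {G u v}

lemma isMatchingSet_subdivideTwice_map_inl_erase {M : Finset (Sym2 V)} (hM : IsMatchingSet G M) :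
    IsMatchingSet (subdivideTwice G u v) ((M.erase s(u, v)).map Function.Embedding.inl.sym2Map) :=
  (hM.erase_deleteEdges s(u, v)).map (subdivideTwiceInl G u v)

lemma exists_isMatchingSet_subdivideTwice_of_mem {M : Finset (Sym2 V)} (hM : IsMatchingSet G M)
    (huv : s(u, v) ∈ M) :
    ∃ M' : Finset (Sym2 (V ⊕ Fin 2)), IsMatchingSet (subdivideTwice G u v) M' ∧
      M'.card = M.card + 1 ∧ Sum.inl ⁻¹' coveredVerts M' ⊆ coveredVerts M := by
  set N := (M.erase s(u, v)).map Function.Embedding.inl.sym2Map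
  have hne : u ≠ v := (G.mem_edgeSet.1 (hM.1 _ huv)).ne
  have hu := hM.notMem_coveredVerts_erase huv (Sym2.mem_mk_left u v)
  have hv := hM.notMem_coveredVerts_erase huv (Sym2.mem_mk_right u v)
  have hdisjP : Disjoint (coveredVerts {s(Sum.inl u, Sum.inr (0 : Fin 2))})
      (coveredVerts {s(Sum.inr 1, Sum.inl v)}) := by
    simp [coveredVerts_singleton, hne.symm]
  set P : Finset (Sym2 (V ⊕ Fin 2)) := {s(Sum.inl u, Sum.inr 0)} ∪ {s(Sum.inr 1, Sum.inl v)}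
  have hNcov : coveredVerts N = Sum.inl '' coveredVerts (M.erase s(u, v)) := coveredVerts_map _ _
  have hPcov : coveredVerts P = {Sum.inl u, Sum.inr 0} ∪ {Sum.inr 1, Sum.inl v} := by
    simp only [P, coveredVerts_union, coveredVerts_singleton]
  have hdisj : Disjoint (coveredVerts N) (coveredVerts P) := by
    simp [hNcov, hPcov, hu, hv]
  refine ⟨N ∪ P, (isMatchingSet_subdivideTwice_map_inl_erase hM).union
    ((IsMatchingSet.singleton (subdivideTwice_adj_inl_inr_zero G u v)).union
      (IsMatchingSet.singleton (subdivideTwice_adj_inr_one_inl G u v)) hdisjP) hdisj, ?_, ?_⟩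
  · rw [card_union_of_disjoint_coveredVerts hdisj, card_union_of_disjoint_coveredVerts hdisjP,
      card_map, card_singleton, card_singleton, card_erase_of_mem huv]
    have := card_pos.2 ⟨_, huv⟩
    omega
  · intro a ha
    rw [Set.mem_preimage, coveredVerts_union, hNcov, hPcov] at ha
    simp only [Set.mem_union, Set.mem_image, Sum.inl.injEq, exists_eq_right, Set.mem_insert_iff,
      reduceCtorEq, Set.mem_singleton_iff, or_false, false_or] at ha
    rcases ha with ha | rfl | rfl
    · exact coveredVerts_mono (erase_subset _ _) ha
    · exact ⟨_, huv, Sym2.mem_mk_left _ _⟩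
    · exact ⟨_, huv, Sym2.mem_mk_right _ _⟩

lemma exists_isMatchingSet_subdivideTwice_of_notMem {M : Finset (Sym2 V)}
    (hM : IsMatchingSet G M) (huv : s(u, v) ∉ M) :
    ∃ M' : Finset (Sym2 (V ⊕ Fin 2)), IsMatchingSet (subdivideTwice G u v) M' ∧
      M'.card = M.card + 1 ∧ Sum.inl ⁻¹' coveredVerts M' ⊆ coveredVerts M := by
  have hN := isMatchingSet_subdivideTwice_map_inl_erase (u := u) (v := v) hM
  rw [erase_eq_of_notMem huv] at hN
  have hdisj : Disjoint (coveredVerts (M.map Function.Embedding.inl.sym2Map))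
      (coveredVerts {s(Sum.inr 0, Sum.inr (1 : Fin 2))}) := by
    simp [coveredVerts_map, coveredVerts_singleton]
  refine ⟨_, hN.union (.singleton (subdivideTwice_adj_inr_zero_inr_one G u v)) hdisj, ?_, ?_⟩
  · rw [card_union_of_disjoint_coveredVerts hdisj, card_map, card_singleton]
  · intro a ha
    rw [Set.mem_preimage, coveredVerts_union, coveredVerts_map, coveredVerts_singleton] at ha
    simpa using ha

lemma exists_isMatchingSet_subdivideTwice {M : Finset (Sym2 V)} (hM : IsMatchingSet G M) :
    ∃ M' : Finset (Sym2 (V ⊕ Fin 2)), IsMatchingSet (subdivideTwice G u v) M' ∧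
      M'.card = M.card + 1 ∧ Sum.inl ⁻¹' coveredVerts M' ⊆ coveredVerts M := by
  by_cases huv : s(u, v) ∈ M
  · exact exists_isMatchingSet_subdivideTwice_of_mem hM huv
  · exact exists_isMatchingSet_subdivideTwice_of_notMem hM huv

lemma exists_isIndepSet_subset_toLeft {I : Finset (V ⊕ Fin 2)}
    (hI : (subdivideTwice G u v).IsIndepSet I) :
    ∃ K ⊆ I.toLeft, I.card ≤ K.card + 1 ∧ G.IsIndepSet K := by
  have hJ : (G.deleteEdges {s(u, v)}).IsIndepSet I.toLeft := fun a ha b hb hab hadj =>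
    hI (mem_toLeft.1 ha) (mem_toLeft.1 hb) (Sum.inl_injective.ne hab)
      ((subdivideTwice_adj_inl G u v).2 hadj)
  have hcard := card_toLeft_add_card_toRight (u := I)
  have hR : I.toRight.card ≤ 1 := by
    have : I.toRight ≠ univ := fun h => hI (mem_toRight.1 (h ▸ mem_univ 0))
      (mem_toRight.1 (h ▸ mem_univ 1)) (by simp) (subdivideTwice_adj_inr_zero_inr_one G u v)
    have := (card_lt_iff_ne_univ _).2 this
    simp only [Fintype.card_fin] at this
    omega
  by_cases h0 : Sum.inr 0 ∈ I
  · have hu : u ∉ I.toLeft := fun hu =>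
      hI (mem_toLeft.1 hu) h0 (by simp) (subdivideTwice_adj_inl_inr_zero G u v)
    exact ⟨_, subset_rfl, by omega, isIndepSet_of_deleteEdges hJ (Or.inl (by simpa using hu))⟩
  by_cases h1 : Sum.inr 1 ∈ I
  · have hv : v ∉ I.toLeft := fun hv =>
      hI h1 (mem_toLeft.1 hv) (by simp) (subdivideTwice_adj_inr_one_inl G u v)
    exact ⟨_, subset_rfl, by omega, isIndepSet_of_deleteEdges hJ (Or.inr (by simpa using hv))⟩
  have hR0 : I.toRight = ∅ := by
    ext i; fin_cases i <;> simp [h0, h1]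
  refine ⟨I.toLeft.erase v, erase_subset _ _, ?_, isIndepSet_of_deleteEdges
    (hJ.mono (by simp)) (Or.inr (by simp))⟩
  have := pred_card_le_card_erase (s := I.toLeft) (a := v)
  rw [hR0, card_empty] at hcard
  omega

end subdivideTwice

theorem not_matchingCondition_subdivideTwice_general (G : SimpleGraph V) (u v : V)
    (hG : ¬ MatchingCondition G) :
    ¬ MatchingCondition (subdivideTwice G u v) := by
  simp only [matchingCondition_iff, not_forall, not_exists, not_and, not_le] at hG ⊢
  obtain ⟨M, hM, hsmall⟩ := hG
  obtain ⟨M', hM', hcard, hcov⟩ := exists_isMatchingSet_subdivideTwice (u := u) (v := v) hM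
  refine ⟨M', hM', fun I hIcov hI => ?_⟩
  obtain ⟨K, hKI, hIK, hK⟩ := exists_isIndepSet_subset_toLeft hI
  have := hsmall K (fun a ha => hcov (hIcov (mem_toLeft.1 (hKI ha)))) hK
  omega

/-- If a finite simple graph `G` violates the matching condition, then so does
the graph `G'` obtained from `G` by subdividing any one of its edges twice. -/
theorem not_matchingCondition_subdivideTwice [Fintype V] (G : SimpleGraph V) (u v : V)
    (huv : G.Adj u v) (hG : ¬ MatchingCondition G) :
    ¬ MatchingCondition (subdivideTwice G u v) :=
  not_matchingCondition_subdivideTwice_general G u v hG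
end

section
/- Every finite simple bipartite graph is strongly EFX-orientable. -/
open SimpleGraph
open scoped Classical

variable {V : Type*}

/-! Every vertex `a` of one side `s` of the bipartition picks a favorite incident edge `m a`,
one of maximal value to `a`. Orienting each favorite edge towards its `s`-end and every other
edge towards its end outside `s` is EFX. The only edge of `X_b` that `a` can value is `ab`, so
envy needs `b` to own `ab` together with a second edge. Then `b ∉ s`, since a vertex of `s`
owns at most its favorite; so `a ∈ s`, and `a` owns its favorite, which it values at least
as much as `ab`. -/

namespace SimpleGraph

variable {G : SimpleGraph V}

theorem IsBipartiteWith.isIndepSet_left {s t : Set V} (h : G.IsBipartiteWith s t) :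
    G.IsIndepSet s :=
  fun _ hv _ hw _ hadj => Set.disjoint_left.mp h.disjoint hw (h.mem_of_mem_adj hv hadj)

theorem IsIndepSet.eq_of_mem_of_mem_edge {s : Set V} (hs : G.IsIndepSet s) {e : Sym2 V}
    (he : e ∈ G.edgeSet) {a b : V} (ha : a ∈ s) (hb : b ∈ s) (hae : a ∈ e) (hbe : b ∈ e) :
    a = b := by
  by_contra hab
  rw [(Sym2.mem_and_mem_iff hab).mp ⟨hae, hbe⟩, mem_edgeSet] at he
  exact hs ha hb hab he

theorem bundleSet_inter_incidenceSet_subset {head : Sym2 V → V}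
    (hhead : ∀ e ∈ G.edgeSet, head e ∈ e) {a b : V} (hab : a ≠ b) :
    bundleSet G head b ∩ G.incidenceSet a ⊆ {s(a, b)} := by
  rintro e ⟨⟨he, rfl⟩, -, hae⟩
  exact (Sym2.mem_and_mem_iff hab).mp ⟨hae, hhead e he⟩

theorem isEFXOrientation_of_forall_pair {f : V → Set (Sym2 V) → NNReal} {head : Sym2 V → V}
    (hmono : ∀ a, Monotone (f a)) (hgraph : ∀ a X, f a X = f a (X ∩ G.incidenceSet a))
    (hhead : ∀ e ∈ G.edgeSet, head e ∈ e)
    (hpair : ∀ a b g, g ∈ bundleSet G head b → s(a, b) ∈ bundleSet G head b → s(a, b) ≠ g →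
      f a {s(a, b)} ≤ f a (bundleSet G head a)) :
    IsEFXOrientation G f head := by
  refine ⟨hhead, fun a b g hg => ?_⟩
  obtain rfl | hab := eq_or_ne a b
  · exact hmono a Set.sdiff_subset
  set Y := bundleSet G head b \ {g}
  have hY : Y ∩ G.incidenceSet a ⊆ {s(a, b)} ∩ Y := fun e he =>
    ⟨bundleSet_inter_incidenceSet_subset hhead hab ⟨he.1.1, he.2⟩, he.1⟩
  rw [hgraph a Y]
  by_cases hY_ab : s(a, b) ∈ Y
  · calc f a (Y ∩ G.incidenceSet a) ≤ f a {s(a, b)} := hmono a (hY.trans Set.inter_subset_left)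
      _ ≤ f a (bundleSet G head a) := hpair a b g hg hY_ab.1 hY_ab.2
  · rw [Set.singleton_inter_eq_empty.mpr hY_ab] at hY
    exact hmono a (hY.trans (Set.empty_subset _))

/-- An edge goes to its end `a ∈ s` if it is the favorite `m a`, and to an end outside `s`
otherwise. -/
noncomputable def favoriteOrientation (s : Set V) (m : V → Sym2 V) (e : Sym2 V) : V :=
  haveI : Nonempty V := ⟨(Quot.out e).1⟩
  Classical.epsilon fun v => v ∈ e ∧ (v ∈ s ↔ ∃ a ∈ s, a ∈ e ∧ m a = e)

section favoriteOrientation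

variable {s : Set V} {m : V → Sym2 V}

theorem favoriteOrientation_spec (hs : G.IsIndepSet s) {e : Sym2 V} (he : e ∈ G.edgeSet) :
    favoriteOrientation s m e ∈ e ∧
      (favoriteOrientation s m e ∈ s ↔ ∃ a ∈ s, a ∈ e ∧ m a = e) := by
  refine Classical.epsilon_spec (p := fun v => v ∈ e ∧ (v ∈ s ↔ ∃ a ∈ s, a ∈ e ∧ m a = e)) ?_
  by_cases hfav : ∃ a ∈ s, a ∈ e ∧ m a = e
  · obtain ⟨a, ha, hae, hma⟩ := hfav
    exact ⟨a, hae, iff_of_true ha ⟨a, ha, hae, hma⟩⟩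
  · obtain ⟨b, hb, hbe⟩ := IsIndepSet.nonempty_mem_compl_mem_edge G hs he
    exact ⟨b, hbe, iff_of_false hb hfav⟩

theorem favoriteOrientation_favorite (hs : G.IsIndepSet s) {a : V} (ha : a ∈ s)
    (hma : m a ∈ G.incidenceSet a) : favoriteOrientation s m (m a) = a := by
  obtain ⟨hmem, hiff⟩ := favoriteOrientation_spec (m := m) hs hma.1
  exact hs.eq_of_mem_of_mem_edge hma.1 (hiff.mpr ⟨a, ha, hma.2, rfl⟩) ha hmem hma.2

theorem bundleSet_favoriteOrientation_subset (hs : G.IsIndepSet s) {a : V} (ha : a ∈ s) :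
    bundleSet G (favoriteOrientation s m) a ⊆ {m a} := by
  rintro e ⟨he, rfl⟩
  obtain ⟨hmem, hiff⟩ := favoriteOrientation_spec (m := m) hs he
  obtain ⟨a', ha', ha'e, rfl⟩ := hiff.mp ha
  rw [hs.eq_of_mem_of_mem_edge he ha ha' hmem ha'e]
  rfl

end favoriteOrientation

theorem exists_favorite_edge [Fintype V] (u : Set (Sym2 V) → NNReal) (a : V) :
    ∃ m : Sym2 V, ∀ e ∈ G.incidenceSet a, m ∈ G.incidenceSet a ∧ u {e} ≤ u {m} := by
  obtain h | hne := (G.incidenceSet a).eq_empty_or_nonempty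
  · exact ⟨s(a, a), by simp [h]⟩
  · obtain ⟨m, hm, hmax⟩ := (G.incidenceSet a).exists_max_image (fun e => u {e})
      (Set.toFinite _) hne
    exact ⟨m, fun e he => ⟨hm, hmax e he⟩⟩

theorem IsBipartiteWith.stronglyEFXOrientable [Fintype V] {s t : Set V}
    (h : G.IsBipartiteWith s t) : StronglyEFXOrientable G := by
  intro f hmono hgraph
  have hs := h.isIndepSet_left
  choose m hm using fun a => exists_favorite_edge (G := G) (f a) a
  set head := favoriteOrientation s m
  refine ⟨head, isEFXOrientation_of_forall_pair hmono hgraph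
    (fun e he => (favoriteOrientation_spec hs he).1) fun a b g hg hab hne => ?_⟩
  have hb : b ∉ s := fun hb =>
    hne ((bundleSet_favoriteOrientation_subset hs hb hab).trans
      (bundleSet_favoriteOrientation_subset hs hb hg).symm)
  have ha : a ∈ s := (h.mem_of_adj hab.1).resolve_right (fun hab' => hb hab'.2) |>.1
  have hab_inc : s(a, b) ∈ G.incidenceSet a := ⟨hab.1, Sym2.mem_mk_left a b⟩
  obtain ⟨hma, hle⟩ := hm a _ hab_inc
  calc f a {s(a, b)} ≤ f a {m a} := hle
    _ ≤ f a (bundleSet G head a) := hmono a <| Set.singleton_subset_iff.mpr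
      ⟨hma.1, favoriteOrientation_favorite hs ha hma⟩

end SimpleGraph

/-- Every finite simple bipartite graph is strongly EFX-orientable. -/
theorem stronglyEFXOrientable_of_bipartite [Fintype V] (G : SimpleGraph V)
    (h : G.Colorable 2) : StronglyEFXOrientable G := by
  obtain ⟨s, t, hst⟩ := IsBipartite.exists_isBipartiteWith h
  exact hst.stronglyEFXOrientable
end

section
/- Let G be a graph obtained from an odd cycle by adding one additional edge (a chord between two non-adjacent vertices of the cycle). Then G is strongly EFX-orientable. -/
open SimpleGraph
open scoped Classical

variable {V : Type*}

open scoped Fin.CommRing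

/-!
For monotone graphical valuations, agent `a` can value `X_b \ {g}` only through the single edge
`{a, b}`. Hence an orientation is EFX as soon as all vertices but one "fat" vertex receive at most
one edge and the other endpoint of each edge of the fat vertex prefers its own bundle to that edge.

On the cycle `v ~ v + 1` with chord `{i, j}` we send the chord to an endpoint `k` and orient the
cycle edges either all backwards, all forwards, or towards a fat vertex `t` along the arc from `t`
to `k`. Write `bb v`, `ff v`, `cc v` for the value to `v` of its backward edge, its forward edge and
the chord. If none of these orientations is EFX, then away from the chord
`ff v ≤ bb v → ff (v + 2) < bb (v + 2)`: a preference for the backward edge propagates in steps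
of two, which reach every vertex because the cycle is odd. This forces all vertices to lean the
same way, up to one exceptional vertex when the chord spans a path of length two, and in each of
these situations one of the orientations above turns out to be EFX after all.
-/

theorem isEFXOrientation_of_subsingleton_of_ne {G : SimpleGraph V}
    {f : V → Set (Sym2 V) → NNReal} (hmono : ∀ a, Monotone (f a))
    (hgraph : ∀ a X, f a X = f a (X ∩ G.incidenceSet a)) {head : Sym2 V → V}
    (hhead : ∀ e ∈ G.edgeSet, head e ∈ e) (φ : V)
    (hsub : ∀ w ≠ φ, (bundleSet G head w).Subsingleton)
    (htail : ∀ a ≠ φ, ∀ e ∈ bundleSet G head φ, a ∈ e →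
      f a {e} ≤ f a (bundleSet G head a)) :
    IsEFXOrientation G f head := by
  refine ⟨hhead, fun a b g hg => ?_⟩
  obtain rfl | hab := eq_or_ne a b
  · exact hmono a Set.sdiff_subset
  rw [hgraph]
  set S := (bundleSet G head b \ {g}) ∩ G.incidenceSet a
  obtain hS | ⟨e, ⟨heb, hne⟩, -, hae⟩ := S.eq_empty_or_nonempty
  · rw [hS]
    exact hmono a (Set.empty_subset _)
  have hab_edge : ∀ x ∈ bundleSet G head b, a ∈ x → x = s(a, b) := fun x hx hax =>
    (Sym2.mem_and_mem_iff hab).1 ⟨hax, hx.2 ▸ hhead x hx.1⟩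
  have hSe : S ⊆ {e} := by
    rintro x ⟨⟨hxb, -⟩, -, hax⟩
    rw [Set.mem_singleton_iff, hab_edge x hxb hax, hab_edge e heb hae]
  obtain rfl : b = φ := by
    by_contra hbφ
    exact hne (hsub b hbφ heb hg)
  exact (hmono a hSe).trans (htail a hab e heb hae)

section Propagation

variable {A : Type*} [AddCommGroup A] {c : A} {P : A → Prop} {a : A}

theorem of_step_until (hc : Function.Surjective fun k : ℕ => k • c)
    (hstep : ∀ v ≠ a, P v → P (v + c)) {u : A} (hu : P u) : P a := by
  obtain ⟨k, hk : k • c = a - u⟩ := hc (a - u)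
  induction k generalizing u with
  | zero =>
    rw [zero_smul, eq_comm, sub_eq_zero] at hk
    exact hk ▸ hu
  | succ k ih =>
    by_cases hua : u = a
    · exact hua ▸ hu
    refine ih (hstep u hua hu) ?_
    rw [succ_nsmul] at hk
    rw [← sub_sub, ← hk, add_sub_cancel_right]

theorem of_step_until_sub (hc : Function.Surjective fun k : ℕ => k • c)
    (hstep : ∀ v ≠ a, P v → P (v + c)) {u : A} (hu : P u) (hua : u ≠ a) : P (a - c) :=
  (of_step_until (P := fun v => P v ∧ v ≠ a) hc
    (fun v hv hPv => ⟨hstep v hPv.2 hPv.1, fun h => hv (eq_sub_of_add_eq h)⟩) ⟨hu, hua⟩).1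

end Propagation

namespace Fin

variable {n : ℕ}

theorem surjective_nsmul_two [NeZero n] (hn : Odd n) :
    Function.Surjective fun k : ℕ => k • (2 : Fin n) := by
  intro x
  have h : (n + 1) / 2 * 2 = n + 1 := Nat.div_mul_cancel (by rcases hn with ⟨l, rfl⟩; omega)
  refine ⟨(n + 1) / 2 * x.val, ?_⟩
  calc ((n + 1) / 2 * x.val) • (2 : Fin n) = (((n + 1) / 2 * 2 : ℕ) : Fin n) * x := by
        rw [nsmul_eq_mul]; push_cast; ring
    _ = x := by rw [h]; push_cast; simp

theorem surjective_nsmul_neg_two [NeZero n] (hn : Odd n) :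
    Function.Surjective fun k : ℕ => k • (-2 : Fin n) := by
  intro x
  obtain ⟨k, hk⟩ := surjective_nsmul_two hn (-x)
  exact ⟨k, by simp only [smul_neg, hk, neg_neg]⟩

instance : NeZero (2 : Fin (n + 3)) :=
  ⟨by rw [Ne, Fin.ext_iff]; simp [Nat.mod_eq_of_lt (show 2 < n + 3 by omega)]⟩

theorem four_ne_zero_of_odd (hn : Odd (n + 3)) : (4 : Fin (n + 3)) ≠ 0 := by
  rw [Ne, Fin.ext_iff, coe_ofNat_eq_mod, val_zero]
  intro h
  have := Nat.le_of_dvd (by norm_num) (Nat.dvd_of_mod_eq_zero h)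
  obtain ⟨k, hk⟩ := hn
  obtain rfl : n = 0 := by omega
  exact absurd h (by decide)

end Fin

section Arc

variable {n : ℕ} {t k v : Fin (n + 3)}

-- `v` lies on the cyclic arc `t, t + 1, …, k - 1`.
def InArc (t k v : Fin (n + 3)) : Prop := (v - t).val < (k - t).val

theorem inArc_left (htk : t ≠ k) : InArc t k t := by
  rw [InArc, sub_self, Fin.val_zero]
  exact Nat.pos_of_ne_zero (Fin.val_ne_iff.2 (sub_ne_zero.2 htk.symm))

theorem not_inArc_right : ¬ InArc t k k := lt_irrefl _

theorem inArc_sub_one_right (htk : t ≠ k) : InArc t k (k - 1) := by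
  have hkt : k - t ≠ 0 := sub_ne_zero.2 htk.symm
  rw [InArc, sub_right_comm, Fin.coe_sub_one, if_neg hkt]
  have : (k - t).val ≠ 0 := Fin.val_ne_iff.2 hkt
  omega

theorem eq_left_of_inArc_of_not_inArc_sub_one (hv : InArc t k v) (hv' : ¬ InArc t k (v - 1)) :
    v = t := by
  by_contra hvt
  rw [InArc, sub_right_comm, Fin.coe_sub_one, if_neg (sub_ne_zero.2 hvt)] at hv'
  exact hv' (lt_of_le_of_lt (Nat.sub_le _ _) hv)

theorem not_inArc_sub_one_left : ¬ InArc t k (t - 1) := by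
  rw [InArc, sub_sub_cancel_left, Fin.coe_neg_one, not_lt]
  exact Nat.le_of_lt_succ (k - t).isLt

theorem inArc_add_one (hv : InArc t k v) (hvk : v + 1 ≠ k) : InArc t k (v + 1) := by
  have hlt : v - t < Fin.last (n + 2) :=
    Fin.lt_def.2 (hv.trans_le (Nat.le_of_lt_succ (k - t).isLt))
  have hval : (v + 1 - t).val = (v - t).val + 1 := by
    rw [add_sub_right_comm, Fin.val_add_one_of_lt hlt]
  rw [InArc, hval]
  exact lt_of_le_of_ne hv fun h => hvk (sub_left_inj.1 (Fin.ext (hval.trans h)))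

end Arc

section Selection

variable {n : ℕ} {α : Type*} [LinearOrder α]

/-- `bb v`, `ff v`, `cc v` stand for the value to `v` of the edges `{v - 1, v}`, `{v, v + 1}` and
of the chord. The three alternatives say that no neighbour of the fat vertex prefers the
edge it lost when the chord goes to `k` and the cycle edges go all backwards, all forwards, or
towards a fat vertex `t` along the arc from `t` to `k`. -/
def GoodChordHead (bb ff cc : Fin (n + 3) → α) (k k' : Fin (n + 3)) : Prop :=
  (ff (k - 1) ≤ bb (k - 1) ∧ cc k' ≤ bb k') ∨
  (bb (k + 1) ≤ ff (k + 1) ∧ cc k' ≤ ff k') ∨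
  ∃ t ≠ k, (if t - 1 = k then ff k ≤ cc k else ff (t - 1) ≤ bb (t - 1)) ∧
    (if t + 1 = k then bb k ≤ cc k else bb (t + 1) ≤ ff (t + 1))

variable {bb ff cc : Fin (n + 3) → α} {i j k k' : Fin (n + 3)}

theorem goodChordHead_of_far {v : Fin (n + 3)} (h₀ : v ≠ k) (h₁ : v + 1 ≠ k)
    (h₂ : v + 2 ≠ k) (hB : ff v ≤ bb v) (hF : bb (v + 2) ≤ ff (v + 2)) :
    GoodChordHead bb ff cc k k' := by
  refine Or.inr (Or.inr ⟨v + 1, h₁, ?_, ?_⟩)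
  · rwa [add_sub_cancel_right, if_neg h₀]
  · rwa [add_assoc, one_add_one_eq_two, if_neg h₂]

theorem goodChordHead_of_succ (h₁ : ff k ≤ cc k) (h₂ : bb (k + 2) ≤ ff (k + 2)) :
    GoodChordHead bb ff cc k k' := by
  refine Or.inr (Or.inr ⟨k + 1, add_ne_left.2 one_ne_zero, ?_, ?_⟩)
  · rwa [add_sub_cancel_right, if_pos rfl]
  · rwa [add_assoc, one_add_one_eq_two, if_neg (add_ne_left.2 two_ne_zero)]

theorem goodChordHead_of_pred (h₁ : ff (k - 2) ≤ bb (k - 2)) (h₂ : bb k ≤ cc k) :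
    GoodChordHead bb ff cc k k' := by
  refine Or.inr (Or.inr ⟨k - 1, fun h => one_ne_zero (sub_eq_self.1 h), ?_, ?_⟩)
  · rwa [sub_sub, one_add_one_eq_two, if_neg fun h => two_ne_zero (sub_eq_self.1 h)]
  · rwa [sub_add_cancel, if_pos rfl]

theorem goodChordHead_or_of_forward (h₁ : bb (k + 1) ≤ ff (k + 1))
    (h₂ : bb (k' + 2) ≤ ff (k' + 2)) :
    GoodChordHead bb ff cc k k' ∨ GoodChordHead bb ff cc k' k := by
  rcases le_or_gt (cc k') (ff k') with h | h
  · exact Or.inl (Or.inr (Or.inl ⟨h₁, h⟩))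
  · exact Or.inr (goodChordHead_of_succ h.le h₂)

theorem goodChordHead_or_of_backward (h₁ : ff (k - 1) ≤ bb (k - 1))
    (h₂ : ff (k' - 2) ≤ bb (k' - 2)) :
    GoodChordHead bb ff cc k k' ∨ GoodChordHead bb ff cc k' k := by
  rcases le_or_gt (cc k') (bb k') with h | h
  · exact Or.inl (Or.inl ⟨h₁, h⟩)
  · exact Or.inr (goodChordHead_of_pred h₂ h.le)

theorem goodChordHead_or_of_forall (hn : Odd (n + 3))
    (hsep : ∀ v, ¬ (ff v ≤ bb v ∧ bb (v + 2) ≤ ff (v + 2))) :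
    GoodChordHead bb ff cc i j ∨ GoodChordHead bb ff cc j i := by
  by_cases hB : ∃ u, ff u ≤ bb u
  · obtain ⟨u, hu⟩ := hB
    have hall : ∀ w, ff w ≤ bb w := fun w =>
      of_step_until (P := fun w => ff w ≤ bb w) (Fin.surjective_nsmul_two hn)
        (fun v _ hv => (not_le.1 fun h => hsep v ⟨hv, h⟩).le) hu
    exact goodChordHead_or_of_backward (hall _) (hall _)
  · push Not at hB
    exact goodChordHead_or_of_forward (hB _).le (hB _).le

theorem goodChordHead_or_of_forall_ne (hn : Odd (n + 3)) (hj : i ≠ j + 1) (hj2 : j = i + 2)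
    (hsep : ∀ v ≠ i, ¬ (ff v ≤ bb v ∧ bb (v + 2) ≤ ff (v + 2))) :
    GoodChordHead bb ff cc i j ∨ GoodChordHead bb ff cc j i := by
  subst hj2
  by_cases hB : ∃ u ≠ i, ff u ≤ bb u
  · obtain ⟨u, hui, hu⟩ := hB
    have hB₂ : ff (i - 2) ≤ bb (i - 2) :=
      of_step_until_sub (Fin.surjective_nsmul_two hn)
        (fun v hv hBv => (not_le.1 fun h => hsep v hv ⟨hBv, h⟩).le) hu hui
    rcases le_or_gt (ff (i + 1)) (bb (i + 1)) with h | h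
    · exact (goodChordHead_or_of_backward (by rwa [show i + 2 - 1 = i + 1 by ring]) hB₂).symm
    -- a weak preference for the forward edge propagates backwards in steps of two
    have hF₄ : bb (i + 2 + 2) ≤ ff (i + 2 + 2) := by
      have := of_step_until_sub (P := fun w => bb w ≤ ff w) (a := i + 2)
        (Fin.surjective_nsmul_neg_two hn)
        (fun w hw hFw => (not_le.1 fun hBw => hsep (w + -2)
          (fun h => hw (by linear_combination h)) ⟨hBw, by rwa [neg_add_cancel_right]⟩).le)
        h.le (fun h => one_ne_zero (by linear_combination -h))
      rwa [show i + 2 - -2 = i + 2 + 2 by ring] at this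
    exact goodChordHead_or_of_forward h.le hF₄
  · push Not at hB
    exact (goodChordHead_or_of_forward (hB _ (Ne.symm hj)).le
      (hB _ (add_ne_left.2 two_ne_zero)).le).symm

theorem goodChordHead_or (hn : Odd (n + 3)) (hij : i ≠ j) (hi : j ≠ i + 1) (hj : i ≠ j + 1) :
    GoodChordHead bb ff cc i j ∨ GoodChordHead bb ff cc j i := by
  by_cases hfar : ∃ v, ((v ≠ i ∧ v + 1 ≠ i ∧ v + 2 ≠ i) ∨
      (v ≠ j ∧ v + 1 ≠ j ∧ v + 2 ≠ j)) ∧ ff v ≤ bb v ∧ bb (v + 2) ≤ ff (v + 2)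
  · obtain ⟨v, ⟨h₀, h₁, h₂⟩ | ⟨h₀, h₁, h₂⟩, hB, hF⟩ := hfar
    · exact Or.inl (goodChordHead_of_far h₀ h₁ h₂ hB hF)
    · exact Or.inr (goodChordHead_of_far h₀ h₁ h₂ hB hF)
  have hsep : ∀ v, ((v ≠ i ∧ v + 1 ≠ i ∧ v + 2 ≠ i) ∨
      (v ≠ j ∧ v + 1 ≠ j ∧ v + 2 ≠ j)) →
      ¬ (ff v ≤ bb v ∧ bb (v + 2) ≤ ff (v + 2)) := fun v hv h => hfar ⟨v, hv, h⟩
  have h₂ := NeZero.ne (2 : Fin (n + 3))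
  have h₄ := Fin.four_ne_zero_of_odd hn
  by_cases hj2 : j = i + 2
  · exact goodChordHead_or_of_forall_ne hn hj hj2 fun v hv => hsep v (by grind)
  by_cases hi2 : i = j + 2
  · exact (goodChordHead_or_of_forall_ne hn hi hi2 fun v hv => hsep v (by grind)).symm
  exact goodChordHead_or_of_forall hn fun v => hsep v (by grind)

end Selection

section ChordedCycle

variable {n : ℕ}

def cycleEdge (v : Fin (n + 3)) : Sym2 (Fin (n + 3)) := s(v, v + 1)

theorem cycleEdge_injective : Function.Injective (cycleEdge (n := n)) := by
  intro u v h
  rcases Sym2.eq_iff.1 h with ⟨huv, -⟩ | ⟨hu, hv⟩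
  · exact huv
  · exact absurd (by linear_combination hv - hu) (NeZero.ne (2 : Fin (n + 3)))

theorem mem_edgeSet_cycleGraph {e : Sym2 (Fin (n + 3))} :
    e ∈ (cycleGraph (n + 3)).edgeSet ↔ ∃ v, e = cycleEdge v := by
  induction e using Sym2.ind with
  | _ x y =>
  rw [mem_edgeSet, cycleGraph_adj]
  constructor
  · rintro (h | h)
    · exact ⟨y, by rw [cycleEdge, ← h, add_sub_cancel, Sym2.eq_swap]⟩
    · exact ⟨x, by rw [cycleEdge, ← h, add_sub_cancel]⟩
  · rintro ⟨v, hv⟩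
    rcases Sym2.eq_iff.1 hv with ⟨rfl, rfl⟩ | ⟨rfl, rfl⟩
    · right; ring
    · left; ring

def chordedCycle (i j : Fin (n + 3)) : SimpleGraph (Fin (n + 3)) :=
  cycleGraph (n + 3) ⊔ fromEdgeSet {s(i, j)}

-- The cycle edge `{v, v + 1}` goes to `v` if `p v` and to `v + 1` otherwise; the chord goes to `k`.
noncomputable def chordedHead (i j : Fin (n + 3)) (p : Fin (n + 3) → Prop) (k : Fin (n + 3))
    (e : Sym2 (Fin (n + 3))) : Fin (n + 3) :=
  if e = s(i, j) then k
  else Function.extend cycleEdge (fun v => if p v then v else v + 1) (fun _ => k) e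

variable {i j k k' : Fin (n + 3)} {p : Fin (n + 3) → Prop}

theorem mem_edgeSet_chordedCycle (hij : i ≠ j) {e : Sym2 (Fin (n + 3))} :
    e ∈ (chordedCycle i j).edgeSet ↔ (∃ v, e = cycleEdge v) ∨ e = s(i, j) := by
  rw [chordedCycle, edgeSet_sup, Set.mem_union, mem_edgeSet_cycleGraph, edgeSet_fromEdgeSet]
  constructor
  · rintro (h | ⟨h, -⟩)
    exacts [Or.inl h, Or.inr h]
  · rintro (h | rfl)
    · exact Or.inl h
    · exact Or.inr ⟨rfl, by simpa using hij⟩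

theorem chordedHead_chord : chordedHead i j p k s(i, j) = k := if_pos rfl

theorem chordedHead_cycleEdge (hnadj : ¬ (cycleGraph (n + 3)).Adj i j) (v : Fin (n + 3)) :
    chordedHead i j p k (cycleEdge v) = if p v then v else v + 1 := by
  have hne : cycleEdge v ≠ s(i, j) := fun h =>
    hnadj (by rw [← mem_edgeSet, ← h, mem_edgeSet_cycleGraph]; exact ⟨v, rfl⟩)
  rw [chordedHead, if_neg hne, cycleEdge_injective.extend_apply]

theorem chordedHead_mem (hij : i ≠ j) (hnadj : ¬ (cycleGraph (n + 3)).Adj i j)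
    (hk : k ∈ s(i, j)) : ∀ e ∈ (chordedCycle i j).edgeSet, chordedHead i j p k e ∈ e := by
  intro e he
  rcases (mem_edgeSet_chordedCycle hij).1 he with ⟨v, rfl⟩ | rfl
  · rw [chordedHead_cycleEdge hnadj]
    split_ifs <;> simp [cycleEdge]
  · rwa [chordedHead_chord]

theorem mem_bundleSet_chordedHead (hij : i ≠ j) (hnadj : ¬ (cycleGraph (n + 3)).Adj i j)
    {w : Fin (n + 3)} {e : Sym2 (Fin (n + 3))} :
    e ∈ bundleSet (chordedCycle i j) (chordedHead i j p k) w ↔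
      (e = cycleEdge w ∧ p w) ∨ (e = cycleEdge (w - 1) ∧ ¬ p (w - 1)) ∨
        (e = s(i, j) ∧ k = w) := by
  constructor
  · rintro ⟨he, rfl⟩
    rcases (mem_edgeSet_chordedCycle hij).1 he with ⟨v, rfl⟩ | rfl
    · rw [chordedHead_cycleEdge hnadj]
      split_ifs with hv
      · exact Or.inl ⟨rfl, hv⟩
      · exact Or.inr (Or.inl ⟨by rw [add_sub_cancel_right], by rwa [add_sub_cancel_right]⟩)
    · exact Or.inr (Or.inr ⟨rfl, chordedHead_chord.symm⟩)
  · rintro (⟨rfl, hw⟩ | ⟨rfl, hw⟩ | ⟨rfl, rfl⟩)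
    · exact ⟨(mem_edgeSet_chordedCycle hij).2 (Or.inl ⟨w, rfl⟩),
        by rw [chordedHead_cycleEdge hnadj, if_pos hw]⟩
    · exact ⟨(mem_edgeSet_chordedCycle hij).2 (Or.inl ⟨w - 1, rfl⟩),
        by rw [chordedHead_cycleEdge hnadj, if_neg hw, sub_add_cancel]⟩
    · exact ⟨(mem_edgeSet_chordedCycle hij).2 (Or.inr rfl), chordedHead_chord⟩

theorem bundleSet_chordedHead_subsingleton (hij : i ≠ j)
    (hnadj : ¬ (cycleGraph (n + 3)).Adj i j) {w : Fin (n + 3)} (hw : p w → p (w - 1))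
    (hk : k = w → p (w - 1) ∧ ¬ p w) :
    (bundleSet (chordedCycle i j) (chordedHead i j p k) w).Subsingleton := by
  intro e he e' he'
  rw [mem_bundleSet_chordedHead hij hnadj] at he he'
  rcases he with ⟨rfl, _⟩ | ⟨rfl, _⟩ | ⟨rfl, _⟩ <;>
    rcases he' with ⟨rfl, _⟩ | ⟨rfl, _⟩ | ⟨rfl, _⟩ <;> tauto

section Orientations

variable {f : Fin (n + 3) → Set (Sym2 (Fin (n + 3))) → NNReal}

theorem isEFXOrientation_chordedHead (hmono : ∀ a, Monotone (f a))
    (hgraph : ∀ a X, f a X = f a (X ∩ (chordedCycle i j).incidenceSet a)) (hij : i ≠ j)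
    (hnadj : ¬ (cycleGraph (n + 3)).Adj i j) (hkk' : s(i, j) = s(k, k')) (φ : Fin (n + 3))
    (hsub : ∀ w ≠ φ, (p w → p (w - 1)) ∧ (k = w → p (w - 1) ∧ ¬ p w))
    (hfwd : p φ → f (φ + 1) {cycleEdge φ} ≤
      f (φ + 1) (bundleSet (chordedCycle i j) (chordedHead i j p k) (φ + 1)))
    (hbwd : ¬ p (φ - 1) → f (φ - 1) {cycleEdge (φ - 1)} ≤
      f (φ - 1) (bundleSet (chordedCycle i j) (chordedHead i j p k) (φ - 1)))
    (hchord : k = φ → f k' {s(i, j)} ≤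
      f k' (bundleSet (chordedCycle i j) (chordedHead i j p k) k')) :
    IsEFXOrientation (chordedCycle i j) f (chordedHead i j p k) := by
  refine isEFXOrientation_of_subsingleton_of_ne hmono hgraph
    (chordedHead_mem hij hnadj (hkk' ▸ Sym2.mem_mk_left k k')) φ
    (fun w hw => bundleSet_chordedHead_subsingleton hij hnadj (hsub w hw).1 (hsub w hw).2) ?_
  intro a ha e he hae
  rw [mem_bundleSet_chordedHead hij hnadj] at he
  rcases he with ⟨rfl, hφ⟩ | ⟨rfl, hφ⟩ | ⟨rfl, rfl⟩
  · obtain rfl : a = φ + 1 := by simpa [cycleEdge, ha] using hae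
    exact hfwd hφ
  · obtain rfl : a = φ - 1 := by simpa [cycleEdge, ha] using hae
    exact hbwd hφ
  · obtain rfl : a = k' := by rw [hkk'] at hae; simpa [ha] using hae
    exact hchord rfl

theorem isEFXOrientation_chordedHead_backward (hmono : ∀ a, Monotone (f a))
    (hgraph : ∀ a X, f a X = f a (X ∩ (chordedCycle i j).incidenceSet a)) (hij : i ≠ j)
    (hnadj : ¬ (cycleGraph (n + 3)).Adj i j) (hkk' : s(i, j) = s(k, k'))
    (h₁ : f (k - 1) {cycleEdge (k - 1)} ≤ f (k - 1) {cycleEdge (k - 1 - 1)})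
    (h₂ : f k' {s(i, j)} ≤ f k' {cycleEdge (k' - 1)}) :
    IsEFXOrientation (chordedCycle i j) f (chordedHead i j (fun _ => False) k) := by
  have hmem : ∀ w, cycleEdge (w - 1) ∈
      bundleSet (chordedCycle i j) (chordedHead i j (fun _ => False) k) w := fun w =>
    (mem_bundleSet_chordedHead hij hnadj).2 (Or.inr (Or.inl ⟨rfl, not_false⟩))
  refine isEFXOrientation_chordedHead hmono hgraph hij hnadj hkk' k
    (fun w hw => ⟨False.elim, fun h => absurd h.symm hw⟩) False.elim ?_ ?_
  · exact fun _ => h₁.trans (hmono _ (Set.singleton_subset_iff.2 (hmem _)))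
  · exact fun _ => h₂.trans (hmono _ (Set.singleton_subset_iff.2 (hmem _)))

theorem isEFXOrientation_chordedHead_forward (hmono : ∀ a, Monotone (f a))
    (hgraph : ∀ a X, f a X = f a (X ∩ (chordedCycle i j).incidenceSet a)) (hij : i ≠ j)
    (hnadj : ¬ (cycleGraph (n + 3)).Adj i j) (hkk' : s(i, j) = s(k, k'))
    (h₁ : f (k + 1) {cycleEdge k} ≤ f (k + 1) {cycleEdge (k + 1)})
    (h₂ : f k' {s(i, j)} ≤ f k' {cycleEdge k'}) :
    IsEFXOrientation (chordedCycle i j) f (chordedHead i j (fun _ => True) k) := by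
  have hmem : ∀ w, cycleEdge w ∈
      bundleSet (chordedCycle i j) (chordedHead i j (fun _ => True) k) w := fun w =>
    (mem_bundleSet_chordedHead hij hnadj).2 (Or.inl ⟨rfl, trivial⟩)
  refine isEFXOrientation_chordedHead hmono hgraph hij hnadj hkk' k
    (fun w hw => ⟨fun _ => trivial, fun h => absurd h.symm hw⟩) ?_
    (fun h => (h trivial).elim) ?_
  · exact fun _ => h₁.trans (hmono _ (Set.singleton_subset_iff.2 (hmem _)))
  · exact fun _ => h₂.trans (hmono _ (Set.singleton_subset_iff.2 (hmem _)))

theorem isEFXOrientation_chordedHead_inArc (hmono : ∀ a, Monotone (f a))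
    (hgraph : ∀ a X, f a X = f a (X ∩ (chordedCycle i j).incidenceSet a)) (hij : i ≠ j)
    (hnadj : ¬ (cycleGraph (n + 3)).Adj i j) (hkk' : s(i, j) = s(k, k')) {t : Fin (n + 3)}
    (htk : t ≠ k)
    (hl : if t - 1 = k then f k {cycleEdge k} ≤ f k {s(i, j)}
      else f (t - 1) {cycleEdge (t - 1)} ≤ f (t - 1) {cycleEdge (t - 1 - 1)})
    (hr : if t + 1 = k then f k {cycleEdge (k - 1)} ≤ f k {s(i, j)}
      else f (t + 1) {cycleEdge t} ≤ f (t + 1) {cycleEdge (t + 1)}) :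
    IsEFXOrientation (chordedCycle i j) f (chordedHead i j (InArc t k) k) := by
  have hchord : s(i, j) ∈ bundleSet (chordedCycle i j) (chordedHead i j (InArc t k) k) k :=
    (mem_bundleSet_chordedHead hij hnadj).2 (Or.inr (Or.inr ⟨rfl, rfl⟩))
  refine isEFXOrientation_chordedHead hmono hgraph hij hnadj hkk' t
    (fun w hw => ⟨fun hin => by_contra fun hin' =>
      hw (eq_left_of_inArc_of_not_inArc_sub_one hin hin'),
      fun h => h ▸ ⟨inArc_sub_one_right htk, not_inArc_right⟩⟩) (fun _ => ?_) (fun _ => ?_)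
    (fun h => absurd h.symm htk)
  · split_ifs at hr with h
    · subst h
      rw [add_sub_cancel_right] at hr
      exact hr.trans (hmono _ (Set.singleton_subset_iff.2 hchord))
    · refine hr.trans (hmono _ (Set.singleton_subset_iff.2 ?_))
      exact (mem_bundleSet_chordedHead hij hnadj).2
        (Or.inl ⟨rfl, inArc_add_one (inArc_left htk) h⟩)
  · split_ifs at hl with h
    · rw [h]
      exact hl.trans (hmono _ (Set.singleton_subset_iff.2 hchord))
    · refine hl.trans (hmono _ (Set.singleton_subset_iff.2 ?_))
      refine (mem_bundleSet_chordedHead hij hnadj).2 (Or.inr (Or.inl ⟨rfl, fun hin => ?_⟩))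
      exact not_inArc_sub_one_left (sub_add_cancel (t - 1) 1 ▸
        inArc_add_one hin (by rwa [sub_add_cancel]))

theorem exists_isEFXOrientation_of_goodChordHead (hmono : ∀ a, Monotone (f a))
    (hgraph : ∀ a X, f a X = f a (X ∩ (chordedCycle i j).incidenceSet a)) (hij : i ≠ j)
    (hnadj : ¬ (cycleGraph (n + 3)).Adj i j) (hkk' : s(i, j) = s(k, k'))
    (h : GoodChordHead (fun v => f v {cycleEdge (v - 1)}) (fun v => f v {cycleEdge v})
      (fun v => f v {s(i, j)}) k k') :
    ∃ head, IsEFXOrientation (chordedCycle i j) f head := by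
  rcases h with ⟨h₁, h₂⟩ | ⟨h₁, h₂⟩ | ⟨t, htk, hl, hr⟩
  · exact ⟨_, isEFXOrientation_chordedHead_backward hmono hgraph hij hnadj hkk' h₁ h₂⟩
  · simp only [add_sub_cancel_right] at h₁
    exact ⟨_, isEFXOrientation_chordedHead_forward hmono hgraph hij hnadj hkk' h₁ h₂⟩
  · simp only [add_sub_cancel_right] at hr
    exact ⟨_, isEFXOrientation_chordedHead_inArc hmono hgraph hij hnadj hkk' htk hl hr⟩

end Orientations

end ChordedCycle

theorem stronglyEFXOrientable_oddCycle_plus_chord_general (n : ℕ) (hodd : Odd n)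
    (i j : Fin n) (hij : i ≠ j) (hnadj : ¬ (cycleGraph n).Adj i j) :
    StronglyEFXOrientable (cycleGraph n ⊔ SimpleGraph.fromEdgeSet {s(i, j)}) := by
  obtain ⟨m, rfl⟩ : ∃ m, n = m + 3 := by
    have : i.val ≠ j.val := Fin.val_ne_of_ne hij
    obtain ⟨l, rfl⟩ := hodd
    exact ⟨2 * l - 2, by omega⟩
  intro f hmono hgraph
  have hi : j ≠ i + 1 := fun h => hnadj (cycleGraph_adj.2 (Or.inr (by rw [h]; ring)))
  have hj : i ≠ j + 1 := fun h => hnadj (cycleGraph_adj.2 (Or.inl (by rw [h]; ring)))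
  rcases goodChordHead_or (bb := fun v => f v {cycleEdge (v - 1)})
    (ff := fun v => f v {cycleEdge v}) (cc := fun v => f v {s(i, j)}) hodd hij hi hj with h | h
  · exact exists_isEFXOrientation_of_goodChordHead hmono hgraph hij hnadj rfl h
  · exact exists_isEFXOrientation_of_goodChordHead hmono hgraph hij hnadj Sym2.eq_swap h

/-- An odd cycle together with one additional chord (an edge between two
non-adjacent vertices of the cycle) is strongly EFX-orientable. -/
theorem stronglyEFXOrientable_oddCycle_plus_chord (n : ℕ) (hodd : Odd n) (hn : 3 ≤ n)
    (i j : Fin n) (hij : i ≠ j) (hnadj : ¬ (cycleGraph n).Adj i j) :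
    StronglyEFXOrientable (cycleGraph n ⊔ SimpleGraph.fromEdgeSet {s(i, j)}) :=
  stronglyEFXOrientable_oddCycle_plus_chord_general n hodd i j hij hnadj
end

section
/- Let G be a finite simple graph with a vertex v of degree 1. Then G − v (G with the vertex v and its incident edge deleted) is strongly EFX-orientable if and only if G is strongly EFX-orientable. -/
open SimpleGraph
open scoped Classical

variable {V : Type*}

/-!
Deleting a vertex preserves strong EFX-orientability: give the deleted vertex the zero valuation,
orient `G` for the extended valuations, and read off the orientation of the edges that survive.
Conversely, if `v` is a leaf, orient `G - v` for the restricted valuations and give the edge at `v`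
to `v`. Then `v` owns at most one good, so nobody envies it up to one good, and `v` itself values
every other bundle at `f v ∅`, since no edge incident to `v` lies in it.
-/

namespace Sym2

variable {s : Set V}

theorem coe_mem_map_subtypeVal_iff {a : s} {e : Sym2 s} : (a : V) ∈ e.map (↑) ↔ a ∈ e := by
  simp

theorem mem_of_mem_map_subtypeVal {a : V} {e : Sym2 s} (h : a ∈ e.map (↑)) : a ∈ s := by
  obtain ⟨b, -, rfl⟩ := mem_map.mp h
  exact b.2

theorem map_subtypeVal_injective : Function.Injective (map ((↑) : s → V)) :=
  map.injective Subtype.val_injective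

theorem mem_range_map_subtypeVal_iff {e : Sym2 V} :
    e ∈ Set.range (map ((↑) : s → V)) ↔ ∀ a ∈ e, a ∈ s := by
  refine ⟨?_, fun h => ⟨e.attachWith h, attachWith_map_subtypeVal h⟩⟩
  rintro ⟨e, rfl⟩ a ha
  exact mem_of_mem_map_subtypeVal ha

theorem exists_map_subtypeVal_eq_of_notMem {v : V} {e : Sym2 V} (he : v ∉ e) :
    ∃ e' : Sym2 {u | u ≠ v}, e'.map (↑) = e :=
  mem_range_map_subtypeVal_iff.mpr fun _ ha => ne_of_mem_of_not_mem ha he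

end Sym2

namespace SimpleGraph

variable {G : SimpleGraph V} {s : Set V}

theorem sym2Map_subtypeVal_mem_edgeSet {e : Sym2 s} :
    e.map (↑) ∈ G.edgeSet ↔ e ∈ (G.induce s).edgeSet := by
  induction e using Sym2.ind with
  | _ a b => simp [Sym2.map_mk]

theorem preimage_sym2Map_incidenceSet (a : s) :
    Sym2.map (↑) ⁻¹' G.incidenceSet a = (G.induce s).incidenceSet a := by
  ext e
  simp [incidenceSet, sym2Map_subtypeVal_mem_edgeSet]

end SimpleGraph

section Restriction

variable {G : SimpleGraph V} {s : Set V}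

noncomputable def extendValuation (s : Set V) (f : s → Set (Sym2 s) → NNReal) :
    V → Set (Sym2 V) → NNReal :=
  fun a X => if ha : a ∈ s then f ⟨a, ha⟩ (Sym2.map (↑) ⁻¹' X) else 0

@[simp]
theorem extendValuation_coe (f : s → Set (Sym2 s) → NNReal) (a : s) (X : Set (Sym2 V)) :
    extendValuation s f a X = f a (Sym2.map (↑) ⁻¹' X) :=
  dif_pos a.2

theorem extendValuation_of_notMem (f : s → Set (Sym2 s) → NNReal) {a : V} (ha : a ∉ s)
    (X : Set (Sym2 V)) : extendValuation s f a X = 0 :=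
  dif_neg ha

theorem monotone_extendValuation {f : s → Set (Sym2 s) → NNReal} (hf : ∀ a, Monotone (f a))
    (a : V) : Monotone (extendValuation s f a) := by
  intro X Y hXY
  by_cases ha : a ∈ s
  · lift a to s using ha
    simpa using hf a (Set.preimage_mono hXY)
  · simp [extendValuation_of_notMem f ha]

theorem extendValuation_inter_incidenceSet {f : s → Set (Sym2 s) → NNReal}
    (hf : ∀ a X, f a X = f a (X ∩ (G.induce s).incidenceSet a)) (a : V) (X : Set (Sym2 V)) :
    extendValuation s f a X = extendValuation s f a (X ∩ G.incidenceSet a) := by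
  by_cases ha : a ∈ s
  · lift a to s using ha
    rw [extendValuation_coe, extendValuation_coe, hf, hf _ (_ ⁻¹' _), Set.preimage_inter,
      preimage_sym2Map_incidenceSet, Set.inter_assoc, Set.inter_self]
  · simp [extendValuation_of_notMem f ha]

noncomputable def restrictOrientation (s : Set V) (head : Sym2 V → V) : Sym2 s → s :=
  fun e => if h : head (e.map (↑)) ∈ s then ⟨_, h⟩ else e.out.1

theorem coe_restrictOrientation {head : Sym2 V → V} (hhead : ∀ e ∈ G.edgeSet, head e ∈ e)
    {e : Sym2 s} (he : e ∈ (G.induce s).edgeSet) :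
    (restrictOrientation s head e : V) = head (e.map (↑)) := by
  have hmem := hhead _ (sym2Map_subtypeVal_mem_edgeSet.mpr he)
  rw [restrictOrientation, dif_pos (Sym2.mem_of_mem_map_subtypeVal hmem)]

theorem bundleSet_restrictOrientation {head : Sym2 V → V} (hhead : ∀ e ∈ G.edgeSet, head e ∈ e)
    (b : s) :
    bundleSet (G.induce s) (restrictOrientation s head) b =
      Sym2.map (↑) ⁻¹' bundleSet G head b := by
  ext e
  simp only [bundleSet, Set.mem_ofPred_eq, Set.mem_preimage, sym2Map_subtypeVal_mem_edgeSet]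
  refine and_congr_right fun he => ?_
  rw [← coe_restrictOrientation hhead he, Subtype.coe_inj]

theorem IsEFXOrientation.induce {f : s → Set (Sym2 s) → NNReal} {head : Sym2 V → V}
    (h : IsEFXOrientation G (extendValuation s f) head) :
    IsEFXOrientation (G.induce s) f (restrictOrientation s head) := by
  obtain ⟨hhead, hEFX⟩ := h
  refine ⟨fun e he => ?_, fun a b g hg => ?_⟩
  · rw [← Sym2.coe_mem_map_subtypeVal_iff, coe_restrictOrientation hhead he]
    exact hhead _ (sym2Map_subtypeVal_mem_edgeSet.mpr he)
  · simp only [bundleSet_restrictOrientation hhead] at hg ⊢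
    have key := hEFX a b _ hg
    rwa [extendValuation_coe, extendValuation_coe, Set.preimage_sdiff, ← Set.image_singleton,
      Sym2.map_subtypeVal_injective.preimage_image] at key

theorem StronglyEFXOrientable.induce [Fintype V] (h : StronglyEFXOrientable G) [Fintype s] :
    StronglyEFXOrientable (G.induce s) := by
  intro f hmono hgraph
  obtain ⟨head, hhead⟩ := h (extendValuation s f) (monotone_extendValuation hmono)
    (extendValuation_inter_incidenceSet hgraph)
  exact ⟨restrictOrientation s head, hhead.induce⟩

end Restriction

section LeafExtension

variable {G : SimpleGraph V} {v : V}

def restrictValuation (s : Set V) (f : V → Set (Sym2 V) → NNReal) :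
    s → Set (Sym2 s) → NNReal :=
  fun a X => f a (Sym2.map (↑) '' X)

theorem monotone_restrictValuation {f : V → Set (Sym2 V) → NNReal} (hf : ∀ a, Monotone (f a))
    (s : Set V) (a : s) : Monotone (restrictValuation s f a) :=
  fun _ _ hXY => hf a (Set.image_mono hXY)

theorem restrictValuation_inter_incidenceSet {f : V → Set (Sym2 V) → NNReal}
    (hf : ∀ a X, f a X = f a (X ∩ G.incidenceSet a)) {s : Set V} (a : s) (X : Set (Sym2 s)) :
    restrictValuation s f a X = restrictValuation s f a (X ∩ (G.induce s).incidenceSet a) := by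
  rw [restrictValuation, restrictValuation, ← preimage_sym2Map_incidenceSet,
    Set.image_inter_preimage]
  exact hf _ _

noncomputable def extendOrientation (v : V) (head : Sym2 {u | u ≠ v} → {u | u ≠ v}) :
    Sym2 V → V :=
  Function.extend (Sym2.map (↑)) (fun e => head e) fun _ => v

theorem extendOrientation_sym2Map (head : Sym2 {u | u ≠ v} → {u | u ≠ v})
    (e : Sym2 {u | u ≠ v}) : extendOrientation v head (e.map (↑)) = head e :=
  Sym2.map_subtypeVal_injective.extend_apply _ _ e

theorem extendOrientation_of_mem (head : Sym2 {u | u ≠ v} → {u | u ≠ v}) {e : Sym2 V}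
    (he : v ∈ e) : extendOrientation v head e = v := by
  refine Function.extend_apply' _ _ _ fun hrange => ?_
  exact Sym2.mem_range_map_subtypeVal_iff.mp hrange v he rfl

theorem extendOrientation_eq_self_iff (head : Sym2 {u | u ≠ v} → {u | u ≠ v}) (e : Sym2 V) :
    extendOrientation v head e = v ↔ v ∈ e := by
  refine ⟨fun h => ?_, extendOrientation_of_mem head⟩
  by_contra he
  obtain ⟨e, rfl⟩ := Sym2.exists_map_subtypeVal_eq_of_notMem he
  exact (head e).2 (extendOrientation_sym2Map head e ▸ h)

theorem bundleSet_extendOrientation_self (head : Sym2 {u | u ≠ v} → {u | u ≠ v}) :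
    bundleSet G (extendOrientation v head) v = G.incidenceSet v := by
  ext e
  simp only [bundleSet, incidenceSet, Set.mem_ofPred_eq, extendOrientation_eq_self_iff]

theorem bundleSet_extendOrientation (head : Sym2 {u | u ≠ v} → {u | u ≠ v})
    (b : {u | u ≠ v}) :
    bundleSet G (extendOrientation v head) b =
      Sym2.map (↑) '' bundleSet (G.induce {u | u ≠ v}) head b := by
  ext e
  constructor
  · rintro ⟨he, hb⟩
    obtain ⟨e, rfl⟩ := Sym2.exists_map_subtypeVal_eq_of_notMem fun hve =>
      b.2 (hb ▸ extendOrientation_of_mem head hve)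
    rw [extendOrientation_sym2Map] at hb
    exact ⟨e, ⟨sym2Map_subtypeVal_mem_edgeSet.mp he, Subtype.coe_injective hb⟩, rfl⟩
  · rintro ⟨e, ⟨he, rfl⟩, rfl⟩
    exact ⟨sym2Map_subtypeVal_mem_edgeSet.mpr he, extendOrientation_sym2Map head e⟩

theorem IsEFXOrientation.of_induce_ne {f : V → Set (Sym2 V) → NNReal}
    (hmono : ∀ a, Monotone (f a)) (hgraph : ∀ a X, f a X = f a (X ∩ G.incidenceSet a))
    (hv : (G.incidenceSet v).Subsingleton) {head : Sym2 {u | u ≠ v} → {u | u ≠ v}}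
    (h : IsEFXOrientation (G.induce {u | u ≠ v}) (restrictValuation _ f) head) :
    IsEFXOrientation G f (extendOrientation v head) := by
  obtain ⟨hhead, hEFX⟩ := h
  refine ⟨fun e he => ?_, fun a b g hg => ?_⟩
  · by_cases hve : v ∈ e
    · rwa [extendOrientation_of_mem head hve]
    obtain ⟨e, rfl⟩ := Sym2.exists_map_subtypeVal_eq_of_notMem hve
    rw [extendOrientation_sym2Map, Sym2.coe_mem_map_subtypeVal_iff]
    exact hhead e (sym2Map_subtypeVal_mem_edgeSet.mp he)
  by_cases hb : b = v
  · subst hb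
    rw [bundleSet_extendOrientation_self] at hg ⊢
    rw [hv.eq_singleton_of_mem hg, Set.sdiff_self]
    exact hmono a (Set.empty_subset _)
  by_cases ha : a = v
  · subst ha
    have hdisj : (bundleSet G (extendOrientation a head) b \ {g}) ∩ G.incidenceSet a = ∅ := by
      refine Set.eq_empty_of_forall_notMem ?_
      rintro e ⟨⟨⟨-, heb⟩, -⟩, -, hae⟩
      exact hb (heb ▸ extendOrientation_of_mem head hae)
    rw [hgraph, hdisj]
    exact hmono a (Set.empty_subset _)
  lift a to {u | u ≠ v} using ha
  lift b to {u | u ≠ v} using hb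
  simp only [bundleSet_extendOrientation] at hg ⊢
  obtain ⟨g, hg, rfl⟩ := hg
  have key := hEFX a b g hg
  rwa [restrictValuation, restrictValuation,
    Set.image_sdiff Sym2.map_subtypeVal_injective, Set.image_singleton] at key

theorem StronglyEFXOrientable.of_induce_ne [Fintype V] (hv : (G.incidenceSet v).Subsingleton)
    (h : StronglyEFXOrientable (G.induce {u | u ≠ v})) : StronglyEFXOrientable G := by
  intro f hmono hgraph
  obtain ⟨head, hhead⟩ := h (restrictValuation _ f) (monotone_restrictValuation hmono _)
    (restrictValuation_inter_incidenceSet hgraph)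
  exact ⟨extendOrientation v head, hhead.of_induce_ne hmono hgraph hv⟩

end LeafExtension

/-- If `v` is a vertex of degree 1 in `G`, then `G - v` is strongly
EFX-orientable if and only if `G` is strongly EFX-orientable. -/
theorem stronglyEFXOrientable_deleteVertex_iff [Fintype V] (G : SimpleGraph V) (v : V)
    (hv : G.degree v = 1) :
    StronglyEFXOrientable (G.induce {u | u ≠ v}) ↔ StronglyEFXOrientable G := by
  have hinc : (G.incidenceSet v).Subsingleton := by
    rw [← Set.subsingleton_coe, ← Fintype.card_le_one_iff_subsingleton,
      card_incidenceSet_eq_degree, hv]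
  exact ⟨.of_induce_ne hinc, fun h => h.induce⟩
end

section
/- Let G be a finite simple graph equipped with an assignment of monotone graphical valuations for which no EFX orientation of G exists, and suppose some edge e = uv of G has zero value for both of its endpoints u and v. Let G' be the graph obtained from G by replacing e with a path of any odd length through new internal vertices (deleting e and adding a u–v path of odd length whose internal vertices are new). Then G' is not strongly EFX-orientable. -/
open SimpleGraph
open scoped Classical

variable {V : Type*}

/-- The `i`-th vertex (for `0 ≤ i ≤ 2*k+1`) along the replacement `u`–`v` path of odd length
`2*k+1`, whose `2*k` internal vertices are the new vertices `Sum.inr j`. -/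
def pathVert (u v : V) (k : ℕ) (i : ℕ) : V ⊕ Fin (2 * k) :=
  if h0 : i = 0 then Sum.inl u
  else if h : i ≤ 2 * k then Sum.inr ⟨i - 1, by omega⟩
  else Sum.inl v

/-- The graph obtained from `G` by deleting the edge `uv` and replacing it with a `u`–`v`
path of odd length `2*k+1` whose internal vertices are new. -/
def replaceByOddPath (G : SimpleGraph V) (u v : V) (k : ℕ) :
    SimpleGraph (V ⊕ Fin (2 * k)) :=
  SimpleGraph.fromEdgeSet
    ((Sym2.map Sum.inl '' (G.edgeSet \ {s(u, v)})) ∪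
      {e | ∃ i : ℕ, i ≤ 2 * k ∧ e = s(pathVert u v k i, pathVert u v k (i + 1))})


/-! Pair up the internal path vertices (positions `2m+1`, `2m+2`) and let both vertices of a pair
value only the edge between them, while the agents of `G` value edges through their trace on `G`.
In an EFX orientation of the new graph no internal vertex receives both of its path edges: its
partner would envy it even after removing the edge it does not value. Hence if the first path edge
does not point to `u`, every path edge points forward and the last one points to `v`. Orienting
`uv` towards that endpoint and all other edges as before is then EFX for `G`, since nobody values
`uv` or a path edge. -/

lemma Set.apply_congr_of_diff_singleton {α β : Type*} {φ : Set α → β} {e : α}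
    (hφ : ∀ X, φ (X \ {e}) = φ X) {A B : Set α} (h : A \ {e} = B \ {e}) : φ A = φ B := by
  rw [← hφ A, h, hφ]

lemma apply_diff_singleton_of_graphical (G : SimpleGraph V) {f : V → Set (Sym2 V) → NNReal}
    {u v : V} (hgraph : ∀ a X, f a X = f a (X ∩ G.incidenceSet a))
    (hzu : ∀ X : Set (Sym2 V), f u (X \ {s(u, v)}) = f u X)
    (hzv : ∀ X : Set (Sym2 V), f v (X \ {s(u, v)}) = f v X)
    (a : V) (X : Set (Sym2 V)) : f a (X \ {s(u, v)}) = f a X := by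
  by_cases ha : a = u ∨ a = v
  · rcases ha with rfl | rfl
    exacts [hzu X, hzv X]
  have huv : s(u, v) ∉ X ∩ G.incidenceSet a := fun h => by
    rcases Sym2.mem_iff.1 h.2.2 with rfl | rfl <;> simp at ha
  rw [hgraph, hgraph a X, ← Set.inter_sdiff_right_comm, Set.sdiff_singleton_eq_self huv]

lemma IsEFXOrientation.eq_of_mem_bundleSet_of_indicator {W : Type*} {H : SimpleGraph W}
    {F : W → Set (Sym2 W) → NNReal} {head : Sym2 W → W} (hefx : IsEFXOrientation H F head)
    {x y : W} {e g : Sym2 W} (hy : ∀ X, F y X = if e ∈ X then 1 else 0) (hxy : x ≠ y)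
    (he : e ∈ bundleSet H head x) (hg : g ∈ bundleSet H head x) : g = e := by
  by_contra hge
  have hey : e ∉ bundleSet H head y := fun h => hxy (he.2.symm.trans h.2)
  have := hefx.2 y x g hg
  rw [hy, hy, if_pos ⟨he, Ne.symm hge⟩, if_neg hey] at this
  exact one_ne_zero (le_zero_iff.1 this)

section OddPath

variable {u v : V} {k : ℕ}

lemma pathVert_zero (u v : V) (k : ℕ) : pathVert u v k 0 = Sum.inl u := rfl

lemma pathVert_of_pos_of_le {i : ℕ} (h₁ : 0 < i) (h₂ : i ≤ 2 * k) :
    pathVert u v k i = Sum.inr ⟨i - 1, by omega⟩ := by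
  rw [pathVert, dif_neg (by omega), dif_pos h₂]

lemma pathVert_of_lt {i : ℕ} (h : 2 * k < i) : pathVert u v k i = Sum.inl v := by
  rw [pathVert, dif_neg (by omega), dif_neg (by omega)]

lemma pathVert_succ (u v : V) (j : Fin (2 * k)) : pathVert u v k (j + 1) = Sum.inr j :=
  pathVert_of_pos_of_le (by omega) j.2

lemma pathVert_ne (huv : u ≠ v) {i j : ℕ} (hi : i ≤ 2 * k + 1) (hj : j ≤ 2 * k + 1)
    (hij : i ≠ j) : pathVert u v k i ≠ pathVert u v k j := by
  unfold pathVert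
  split_ifs <;> simp_all <;> first | omega | exact Ne.symm huv

def pathEdge (u v : V) (k i : ℕ) : Sym2 (V ⊕ Fin (2 * k)) :=
  s(pathVert u v k i, pathVert u v k (i + 1))

lemma pathVert_eq_inl {i : ℕ} {x : V} (h : pathVert u v k i = Sum.inl x) :
    i = 0 ∧ x = u ∨ 2 * k < i ∧ x = v := by
  unfold pathVert at h
  split_ifs at h <;> simp_all

lemma pathEdge_mem_edgeSet (G : SimpleGraph V) (huv : u ≠ v) {i : ℕ} (hi : i ≤ 2 * k) :
    pathEdge u v k i ∈ (replaceByOddPath G u v k).edgeSet := by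
  refine ⟨Or.inr ⟨i, hi, rfl⟩, ?_⟩
  exact pathVert_ne (i := i) (j := i + 1) huv (by omega) (by omega) (by omega)

lemma pathEdge_ne_succ (huv : u ≠ v) {i : ℕ} (hi : i < 2 * k) :
    pathEdge u v k i ≠ pathEdge u v k (i + 1) := by
  rw [pathEdge, pathEdge, ne_eq, Sym2.eq_iff]
  rintro (⟨h, -⟩ | ⟨h, -⟩)
  · exact pathVert_ne huv (by omega) (by omega) (by omega) h
  · exact pathVert_ne huv (by omega) (by omega) (by omega) h

lemma eq_of_map_inl_eq_pathEdge {i : ℕ} (hi : i ≤ 2 * k) {e : Sym2 V}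
    (h : Sym2.map Sum.inl e = pathEdge u v k i) : e = s(u, v) := by
  induction e using Sym2.ind with
  | _ x y =>
    rw [Sym2.map_mk, pathEdge, Sym2.eq_iff] at h
    rcases h with ⟨hx, hy⟩ | ⟨hx, hy⟩ <;>
      rcases pathVert_eq_inl hx.symm with ⟨_, rfl⟩ | ⟨_, rfl⟩ <;>
      rcases pathVert_eq_inl hy.symm with ⟨_, rfl⟩ | ⟨_, rfl⟩ <;>
      first | omega | exact Sym2.eq_swap | rfl

lemma map_inl_mem_edgeSet_replaceByOddPath_iff (G : SimpleGraph V) {e : Sym2 V}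
    (hne : e ≠ s(u, v)) :
    Sym2.map Sum.inl e ∈ (replaceByOddPath G u v k).edgeSet ↔ e ∈ G.edgeSet := by
  rw [replaceByOddPath, SimpleGraph.edgeSet_fromEdgeSet]
  constructor
  · rintro ⟨⟨e', ⟨he', -⟩, heq⟩ | ⟨i, hi, heq⟩, -⟩
    · rwa [← Sym2.map.injective Sum.inl_injective heq]
    · exact absurd (eq_of_map_inl_eq_pathEdge hi heq) hne
  · intro he
    refine ⟨Or.inl ⟨e, ⟨he, hne⟩, rfl⟩, ?_⟩
    simpa [Sym2.isDiag_map Sum.inl_injective] using G.not_isDiag_of_mem_edgeSet he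

lemma inr_mem_pathEdge (u v : V) (j : Fin (2 * k)) :
    Sum.inr j ∈ pathEdge u v k (2 * ((j : ℕ) / 2) + 1) := by
  rcases (by omega : 2 * ((j : ℕ) / 2) + 1 = j + 1 ∨ 2 * ((j : ℕ) / 2) + 1 + 1 = j + 1)
    with h | h <;>
    rw [pathEdge, h, pathVert_succ] <;> simp

noncomputable def pathValuation (u v : V) (k : ℕ) (f : V → Set (Sym2 V) → NNReal) :
    V ⊕ Fin (2 * k) → Set (Sym2 (V ⊕ Fin (2 * k))) → NNReal
  | Sum.inl a => fun X => f a (Sym2.map Sum.inl ⁻¹' X)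
  | Sum.inr j => fun X => if pathEdge u v k (2 * ((j : ℕ) / 2) + 1) ∈ X then 1 else 0

variable {f : V → Set (Sym2 V) → NNReal}

lemma pathValuation_inl (a : V) (X : Set (Sym2 (V ⊕ Fin (2 * k)))) :
    pathValuation u v k f (Sum.inl a) X = f a (Sym2.map Sum.inl ⁻¹' X) := rfl

lemma pathValuation_inr {j : Fin (2 * k)} {m : ℕ} (hj : (j : ℕ) / 2 = m)
    (X : Set (Sym2 (V ⊕ Fin (2 * k)))) :
    pathValuation u v k f (Sum.inr j) X = if pathEdge u v k (2 * m + 1) ∈ X then 1 else 0 := by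
  rw [← hj]; rfl

lemma pathValuation_monotone (hmono : ∀ a, Monotone (f a)) :
    ∀ a, Monotone (pathValuation u v k f a)
  | Sum.inl a => fun _ _ hXY => hmono a (Set.preimage_mono hXY)
  | Sum.inr j => fun X _ hXY => by
    by_cases hX : pathEdge u v k (2 * ((j : ℕ) / 2) + 1) ∈ X
    · simp [pathValuation, hX, hXY hX]
    · simp [pathValuation, hX]

lemma pathValuation_graphical (G : SimpleGraph V) (huv : u ≠ v)
    (hgraph : ∀ a X, f a X = f a (X ∩ G.incidenceSet a))
    (hz : ∀ a X, f a (X \ {s(u, v)}) = f a X) :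
    ∀ a X, pathValuation u v k f a X =
      pathValuation u v k f a (X ∩ (replaceByOddPath G u v k).incidenceSet a)
  | Sum.inl a, X => by
    rw [pathValuation_inl, pathValuation_inl, hgraph, hgraph a (_ ⁻¹' (X ∩ _))]
    refine Set.apply_congr_of_diff_singleton (hz a) ?_
    ext e
    by_cases hne : e = s(u, v)
    · simp [hne]
    have hI : e ∈ G.incidenceSet a → Sym2.map Sum.inl e ∈
        (replaceByOddPath G u v k).incidenceSet (Sum.inl a) := fun he =>
      ⟨(map_inl_mem_edgeSet_replaceByOddPath_iff G hne).2 he.1,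
        Sym2.mem_map.2 ⟨a, he.2, rfl⟩⟩
    simp only [Set.mem_sdiff, Set.mem_inter_iff, Set.mem_preimage, Set.mem_singleton_iff]
    tauto
  | Sum.inr j, X => by
    have hI : pathEdge u v k (2 * ((j : ℕ) / 2) + 1) ∈
        (replaceByOddPath G u v k).incidenceSet (Sum.inr j) :=
      ⟨pathEdge_mem_edgeSet G huv (by omega), inr_mem_pathEdge u v j⟩
    by_cases hX : pathEdge u v k (2 * ((j : ℕ) / 2) + 1) ∈ X
    · simp [pathValuation, hX, hI]
    · simp [pathValuation, hX]

variable {G : SimpleGraph V} {head : Sym2 (V ⊕ Fin (2 * k)) → V ⊕ Fin (2 * k)}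

lemma IsEFXOrientation.not_head_pathEdge_eq_of_head_succ (huv : u ≠ v)
    (hefx : IsEFXOrientation (replaceByOddPath G u v k) (pathValuation u v k f) head)
    {i : ℕ} (hi : i < 2 * k) (h₁ : head (pathEdge u v k i) = pathVert u v k (i + 1)) :
    head (pathEdge u v k (i + 1)) ≠ pathVert u v k (i + 1) := by
  intro h₂
  have hmem : ∀ n, n = i ∨ n = i + 1 →
      pathEdge u v k n ∈ bundleSet (replaceByOddPath G u v k) head (Sum.inr ⟨i, hi⟩) := by
    rintro n (rfl | rfl)
    exacts [⟨pathEdge_mem_edgeSet G huv hi.le, h₁.trans (pathVert_succ u v ⟨n, hi⟩)⟩,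
      ⟨pathEdge_mem_edgeSet G huv hi, h₂.trans (pathVert_succ u v ⟨i, hi⟩)⟩]
  -- the internal vertices `⟨2m⟩`, `⟨2m+1⟩` (path positions `2m+1`, `2m+2`) both value only the
  -- path edge `2m+1`
  obtain ⟨m, rfl | rfl⟩ := Nat.even_or_odd' i
  · exact pathEdge_ne_succ huv hi (hefx.eq_of_mem_bundleSet_of_indicator
      (y := Sum.inr ⟨2 * m + 1, by omega⟩) (pathValuation_inr (by simp; omega)) (by simp)
      (hmem _ (Or.inr rfl)) (hmem _ (Or.inl rfl)))
  · exact pathEdge_ne_succ huv hi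
      (hefx.eq_of_mem_bundleSet_of_indicator (y := Sum.inr ⟨2 * m, by omega⟩)
        (pathValuation_inr (by simp)) (by simp) (hmem _ (Or.inl rfl)) (hmem _ (Or.inr rfl))).symm

lemma IsEFXOrientation.head_pathEdge_eq_pathVert_succ (huv : u ≠ v)
    (hefx : IsEFXOrientation (replaceByOddPath G u v k) (pathValuation u v k f) head)
    (h₀ : head (pathEdge u v k 0) ≠ Sum.inl u) :
    ∀ i ≤ 2 * k, head (pathEdge u v k i) = pathVert u v k (i + 1)
  | 0, hi => by
    have := hefx.1 _ (pathEdge_mem_edgeSet G huv hi)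
    rw [pathEdge, Sym2.mem_iff, pathVert_zero] at this
    exact this.resolve_left h₀
  | i + 1, hi => by
    have := hefx.1 _ (pathEdge_mem_edgeSet G huv hi)
    rw [pathEdge, Sym2.mem_iff] at this
    exact this.resolve_left (hefx.not_head_pathEdge_eq_of_head_succ huv hi
      (hefx.head_pathEdge_eq_pathVert_succ huv h₀ i (by omega)))

lemma IsEFXOrientation.exists_head_pathEdge_eq_inl (huv : u ≠ v)
    (hefx : IsEFXOrientation (replaceByOddPath G u v k) (pathValuation u v k f) head) :
    ∃ c ∈ s(u, v), ∃ i ≤ 2 * k, head (pathEdge u v k i) = Sum.inl c := by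
  by_cases h₀ : head (pathEdge u v k 0) = Sum.inl u
  · exact ⟨u, Sym2.mem_mk_left u v, 0, Nat.zero_le _, h₀⟩
  · refine ⟨v, Sym2.mem_mk_right u v, 2 * k, le_rfl, ?_⟩
    rw [hefx.head_pathEdge_eq_pathVert_succ huv h₀ _ le_rfl, pathVert_of_lt (by omega)]

end OddPath

section RestrictHead

variable {W : Type*} {u v c : V} {head : Sym2 (V ⊕ W) → V ⊕ W} {e : Sym2 V}

noncomputable def restrictHead (u v c : V) (head : Sym2 (V ⊕ W) → V ⊕ W) (e : Sym2 V) : V :=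
  if e = s(u, v) then c else (head (Sym2.map Sum.inl e)).elim id fun _ => c

lemma inl_restrictHead (hne : e ≠ s(u, v))
    (hmem : head (Sym2.map Sum.inl e) ∈ Sym2.map Sum.inl e) :
    Sum.inl (restrictHead u v c head e) = head (Sym2.map Sum.inl e) := by
  obtain ⟨w, -, hw⟩ := Sym2.mem_map.1 hmem
  rw [restrictHead, if_neg hne, ← hw]
  rfl

lemma restrictHead_mem (hc : c ∈ s(u, v))
    (hmem : e ≠ s(u, v) → head (Sym2.map Sum.inl e) ∈ Sym2.map Sum.inl e) :
    restrictHead u v c head e ∈ e := by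
  by_cases hne : e = s(u, v)
  · rwa [restrictHead, if_pos hne, hne]
  · have h := hmem hne
    rw [← inl_restrictHead hne h] at h
    obtain ⟨w, hw, hwe⟩ := Sym2.mem_map.1 h
    rwa [← Sum.inl_injective hwe]

end RestrictHead

section Transfer

variable {G : SimpleGraph V} {u v c : V} {k : ℕ}
  {head : Sym2 (V ⊕ Fin (2 * k)) → V ⊕ Fin (2 * k)}

lemma preimage_bundleSet_diff_singleton
    (hmem : ∀ e ∈ (replaceByOddPath G u v k).edgeSet, head e ∈ e) (b : V) :
    Sym2.map Sum.inl ⁻¹' bundleSet (replaceByOddPath G u v k) head (Sum.inl b) \ {s(u, v)} =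
      bundleSet G (restrictHead u v c head) b \ {s(u, v)} := by
  ext e
  by_cases hne : e = s(u, v)
  · simp [hne]
  simp only [bundleSet, Set.mem_sdiff, Set.mem_preimage, Set.mem_ofPred_eq,
    Set.mem_singleton_iff, hne, not_false_eq_true, and_true,
    map_inl_mem_edgeSet_replaceByOddPath_iff G hne]
  refine and_congr_right fun he => ?_
  rw [← inl_restrictHead hne (hmem _ ((map_inl_mem_edgeSet_replaceByOddPath_iff G hne).2 he)),
    Sum.inl.injEq]

theorem isEFXOrientation_restrictHead {f : V → Set (Sym2 V) → NNReal} (huv : u ≠ v)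
    (hz : ∀ a X, f a (X \ {s(u, v)}) = f a X)
    (hefx : IsEFXOrientation (replaceByOddPath G u v k) (pathValuation u v k f) head)
    (hc : c ∈ s(u, v)) {i : ℕ} (hi : i ≤ 2 * k)
    (hhead : head (pathEdge u v k i) = Sum.inl c) :
    IsEFXOrientation G f (restrictHead u v c head) := by
  set G' := replaceByOddPath G u v k
  have htrace := preimage_bundleSet_diff_singleton (c := c) hefx.1
  have hval : ∀ a b, f a (bundleSet G (restrictHead u v c head) b) =
      pathValuation u v k f (Sum.inl a) (bundleSet G' head (Sum.inl b)) := fun a b =>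
    Set.apply_congr_of_diff_singleton (hz a) (htrace b).symm
  refine ⟨fun e he => restrictHead_mem hc fun hne =>
    hefx.1 _ ((map_inl_mem_edgeSet_replaceByOddPath_iff G hne).2 he), fun a b g hg => ?_⟩
  -- `g'` stands in for `g` in `G'`; for `g = uv` it is the path edge pointing to `c`
  obtain ⟨g', hg', hgg'⟩ : ∃ g' ∈ bundleSet G' head (Sum.inl b),
      ∀ x ≠ s(u, v), Sym2.map Sum.inl x = g' ↔ x = g := by
    by_cases hgs : g = s(u, v)
    · have hb : c = b := by rw [← hg.2, hgs, restrictHead, if_pos rfl]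
      refine ⟨pathEdge u v k i, ⟨pathEdge_mem_edgeSet G huv hi, hb ▸ hhead⟩, fun x hx =>
        iff_of_false (fun h => hx (eq_of_map_inl_eq_pathEdge hi h)) (hgs ▸ hx)⟩
    · have hmap := (map_inl_mem_edgeSet_replaceByOddPath_iff (k := k) G hgs).2 hg.1
      refine ⟨Sym2.map Sum.inl g, ⟨hmap, ?_⟩, fun x _ =>
        (Sym2.map.injective Sum.inl_injective).eq_iff⟩
      rw [← inl_restrictHead hgs (hefx.1 _ hmap), hg.2]
  calc f a (bundleSet G (restrictHead u v c head) b \ {g})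
      = pathValuation u v k f (Sum.inl a) (bundleSet G' head (Sum.inl b) \ {g'}) := by
        refine Set.apply_congr_of_diff_singleton (hz a) (Set.ext fun x => ?_)
        by_cases hx : x = s(u, v)
        · simp [hx]
        have := Set.ext_iff.1 (htrace b) x
        simp only [Set.mem_sdiff, Set.mem_preimage, Set.mem_singleton_iff, hx,
          not_false_eq_true, and_true] at this ⊢
        rw [← this, hgg' x hx]
    _ ≤ pathValuation u v k f (Sum.inl a) (bundleSet G' head (Sum.inl a)) := hefx.2 _ _ g' hg'
    _ = f a (bundleSet G (restrictHead u v c head) a) := (hval a a).symm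

end Transfer

/-- Suppose `G` carries monotone graphical valuations `f` admitting no EFX
orientation, and the edge `uv` has zero value for both of its endpoints. Then the graph
obtained from `G` by replacing `uv` with a path of any odd length (through new internal
vertices) is not strongly EFX-orientable. -/
theorem not_stronglyEFXOrientable_replaceByOddPath [Fintype V] (G : SimpleGraph V)
    (u v : V) (huv : G.Adj u v)
    (f : V → Set (Sym2 V) → NNReal)
    (hmono : ∀ a, Monotone (f a))
    (hgraph : ∀ a X, f a X = f a (X ∩ G.incidenceSet a))
    (hzu : ∀ X : Set (Sym2 V), f u (X \ {s(u, v)}) = f u X)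
    (hzv : ∀ X : Set (Sym2 V), f v (X \ {s(u, v)}) = f v X)
    (hno : ¬ ∃ head : Sym2 V → V, IsEFXOrientation G f head)
    (k : ℕ) :
    ¬ StronglyEFXOrientable (replaceByOddPath G u v k) := by
  intro hS
  have hz := apply_diff_singleton_of_graphical G hgraph hzu hzv
  obtain ⟨head, hefx⟩ := hS (pathValuation u v k f) (pathValuation_monotone hmono)
    (pathValuation_graphical G huv.ne hgraph hz)
  obtain ⟨c, hc, i, hi, hhead⟩ := hefx.exists_head_pathEdge_eq_inl huv.ne
  exact hno ⟨_, isEFXOrientation_restrictHead huv.ne hz hefx hc hi hhead⟩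
end

section
/- Let G be a finite simple graph that is the union of two odd cycles whose intersection is exactly one edge (they share exactly two vertices, which are adjacent, and the edge between them, and no other vertices or edges). Then G is not strongly EFX-orientable. -/
open SimpleGraph
open scoped Classical

variable {V : Type*}

/-- The edge set of the cycle traced by an injective map `c : ZMod n → V`
(for `n ≥ 3` this is an `n`-cycle on the image of `c`). -/
def cycleEdges {n : ℕ} (c : ZMod n → V) : Set (Sym2 V) :=
  Set.range fun i : ZMod n => s(c i, c (i + 1))

/-!
The two cycles form a theta graph: the chord `ab` together with a path `p` from `a` to `b` and a
path `q` from `b` to `a`, both of even length. Read from its start, each path alternates worthless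
edges with edges worth `1` to their near and `2` to their far endpoint; in addition `a` and `b`
value the chord at `1`. With these additive valuations, an agent that values some edge `e` above
its own bundle forces the head of `e` to receive `e` alone.

Say the chord points to `b`. If the last edge of `q` points away from `a`, then `a` is left with a
worthless edge, so `b` keeps only the chord, and the forcing travels back along `q` until its first
edge must point to `b` as well. If it points to `a`, then `a` keeps only that edge, and the forcing
travels forward along `p` until `b` would have to give up the chord. The situation is symmetric
under exchanging `(a, p)` with `(b, q)`.
-/

section Valuation

variable [Fintype V] (G : SimpleGraph V) (w : V → Sym2 V → ℕ)

noncomputable def additiveValuation (x : V) (S : Set (Sym2 V)) : NNReal :=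
  ∑ e ∈ Finset.univ.filter (fun e => e ∈ G.incidenceSet x ∧ e ∈ S), (w x e : NNReal)

variable {G w}

lemma additiveValuation_mono (x : V) : Monotone (additiveValuation G w x) :=
  fun _ _ hST => Finset.sum_le_sum_of_subset fun _ he => by
    simp only [Finset.mem_filter, Finset.mem_univ, true_and] at he ⊢
    exact ⟨he.1, hST he.2⟩

lemma additiveValuation_inter_incidenceSet (x : V) (S : Set (Sym2 V)) :
    additiveValuation G w x S = additiveValuation G w x (S ∩ G.incidenceSet x) := by
  unfold additiveValuation
  congr 1
  ext e
  simp only [Finset.mem_filter, Finset.mem_univ, true_and, Set.mem_inter_iff]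
  tauto

lemma additiveValuation_singleton {x : V} {e : Sym2 V} (he : e ∈ G.incidenceSet x) :
    additiveValuation G w x {e} = w x e := by
  unfold additiveValuation
  rw [Finset.sum_eq_single_of_mem e (by simpa using he)]
  intro e' he' hne
  simp only [Finset.mem_filter, Finset.mem_univ, true_and, Set.mem_singleton_iff] at he'
  exact absurd he'.2 hne

lemma additiveValuation_le_sum {x : V} {S : Set (Sym2 V)} (T : Finset (Sym2 V)) (hST : S ⊆ T) :
    additiveValuation G w x S ≤ ∑ e ∈ T, (w x e : NNReal) :=
  Finset.sum_le_sum_of_subset fun e he => by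
    simp only [Finset.mem_filter, Finset.mem_univ, true_and] at he
    exact hST he.2

lemma additiveValuation_eq_zero_of_subset_singleton {x : V} {S : Set (Sym2 V)} {e : Sym2 V}
    (hS : S ⊆ {e}) (he : w x e = 0) : additiveValuation G w x S = 0 :=
  le_antisymm ((additiveValuation_le_sum {e} (by simpa using hS)).trans (by simp [he])) zero_le

end Valuation

section EFX

variable {G : SimpleGraph V} {f : V → Set (Sym2 V) → NNReal} {head : Sym2 V → V}

lemma IsEFXOrientation.bundleSet_subset_incidenceSet (h : IsEFXOrientation G f head) (v : V) :
    bundleSet G head v ⊆ G.incidenceSet v :=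
  fun e ⟨he, hv⟩ => ⟨he, hv ▸ h.1 e he⟩

/-- Removing any other edge from the bundle containing `e` would leave something `x` envies. -/
lemma IsEFXOrientation.bundleSet_subset_singleton (h : IsEFXOrientation G f head)
    {x : V} (hf : Monotone (f x)) {e : Sym2 V} (he : e ∈ G.edgeSet)
    (hlt : f x (bundleSet G head x) < f x {e}) : bundleSet G head (head e) ⊆ {e} := by
  intro g hg
  by_contra hne
  have hsub : ({e} : Set (Sym2 V)) ⊆ bundleSet G head (head e) \ {g} := by
    rintro _ rfl
    exact ⟨⟨he, rfl⟩, fun h => hne (Set.mem_singleton_iff.1 h).symm⟩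
  exact (hf hsub |>.trans (h.2 x _ g hg)).not_gt hlt

lemma IsEFXOrientation.bundleSet_subset_singleton_of_lt [Fintype V] {w : V → Sym2 V → ℕ}
    (h : IsEFXOrientation G (additiveValuation G w) head) {x : V} {e : Sym2 V}
    (he : e ∈ G.incidenceSet x) (hlt : additiveValuation G w x (bundleSet G head x) < w x e) :
    bundleSet G head (head e) ⊆ {e} :=
  h.bundleSet_subset_singleton (additiveValuation_mono x) he.1
    (by rwa [additiveValuation_singleton he])

end EFX

structure IsThread (G : SimpleGraph V) (p : ℕ → V) (L : ℕ) : Prop where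
  injOn : Set.InjOn p (Set.Iic L)
  adj : ∀ i < L, G.Adj (p i) (p (i + 1))
  incidenceSet_subset : ∀ i, i + 1 < L →
    G.incidenceSet (p (i + 1)) ⊆ {s(p i, p (i + 1)), s(p (i + 1), p (i + 2))}

namespace IsThread

variable {G : SimpleGraph V} {p : ℕ → V} {L i : ℕ} {f : V → Set (Sym2 V) → NNReal}
  {head : Sym2 V → V}

lemma edge_mem (hp : IsThread G p L) (hi : i < L) : s(p i, p (i + 1)) ∈ G.edgeSet :=
  hp.adj i hi

lemma edge_ne (hp : IsThread G p L) (hi : i + 1 < L) :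
    s(p i, p (i + 1)) ≠ s(p (i + 1), p (i + 2)) := by
  intro heq
  rcases Sym2.eq_iff.1 heq with ⟨h1, -⟩ | ⟨h1, -⟩
  · exact (hp.adj i (by omega)).ne h1
  · have := hp.injOn (Set.mem_Iic.2 (by omega)) (Set.mem_Iic.2 (by omega)) h1
    omega

lemma head_eq_or (hp : IsThread G p L) (h : IsEFXOrientation G f head) (hi : i < L) :
    head s(p i, p (i + 1)) = p i ∨ head s(p i, p (i + 1)) = p (i + 1) :=
  Sym2.mem_iff.1 (h.1 _ (hp.edge_mem hi))

lemma head_eq_left (hp : IsThread G p L) (h : IsEFXOrientation G f head) (hi : i + 1 < L)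
    (hB : bundleSet G head (p (i + 1)) ⊆ {s(p (i + 1), p (i + 2))}) :
    head s(p i, p (i + 1)) = p i :=
  (hp.head_eq_or h (by omega)).resolve_right fun h' =>
    hp.edge_ne hi (hB ⟨hp.edge_mem (i := i) (by omega), h'⟩)

lemma head_eq_right (hp : IsThread G p L) (h : IsEFXOrientation G f head) (hi : i + 1 < L)
    (hB : bundleSet G head (p (i + 1)) ⊆ {s(p i, p (i + 1))}) :
    head s(p (i + 1), p (i + 2)) = p (i + 2) :=
  (hp.head_eq_or h hi).resolve_left fun h' => hp.edge_ne hi (hB ⟨hp.edge_mem hi, h'⟩).symm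

lemma bundleSet_subset_left (hp : IsThread G p L) (h : IsEFXOrientation G f head)
    (hi : i + 1 < L) (hne : head s(p (i + 1), p (i + 2)) ≠ p (i + 1)) :
    bundleSet G head (p (i + 1)) ⊆ {s(p i, p (i + 1))} := by
  intro e he
  rcases hp.incidenceSet_subset i hi (h.bundleSet_subset_incidenceSet _ he) with rfl | rfl
  · rfl
  · exact absurd he.2 hne

lemma bundleSet_subset_right (hp : IsThread G p L) (h : IsEFXOrientation G f head)
    (hi : i + 1 < L) (hne : head s(p i, p (i + 1)) ≠ p (i + 1)) :
    bundleSet G head (p (i + 1)) ⊆ {s(p (i + 1), p (i + 2))} := by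
  intro e he
  rcases hp.incidenceSet_subset i hi (h.bundleSet_subset_incidenceSet _ he) with rfl | rfl
  · exact absurd he.2 hne
  · rfl

end IsThread

structure IsAlternating (w : V → Sym2 V → ℕ) (p : ℕ → V) (k : ℕ) : Prop where
  poor : ∀ r ≤ k, w (p (2 * r + 1)) s(p (2 * r + 1), p (2 * r + 2)) = 1
  rich : ∀ r ≤ k, w (p (2 * r + 2)) s(p (2 * r + 1), p (2 * r + 2)) = 2
  zero_left : ∀ r ≤ k, w (p (2 * r)) s(p (2 * r), p (2 * r + 1)) = 0
  zero_right : ∀ r ≤ k, w (p (2 * r + 1)) s(p (2 * r), p (2 * r + 1)) = 0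

namespace IsAlternating

variable [Fintype V] {G : SimpleGraph V} {w : V → Sym2 V → ℕ} {head : Sym2 V → V}
  {p : ℕ → V} {k r : ℕ}

variable (hw : IsAlternating w p k) (hp : IsThread G p (2 * k + 2))
  (h : IsEFXOrientation G (additiveValuation G w) head)
include hw hp h

lemma bundleSet_rich_subset (hr : r ≤ k)
    (hhead : head s(p (2 * r + 1), p (2 * r + 2)) = p (2 * r + 2)) :
    bundleSet G head (p (2 * r + 2)) ⊆ {s(p (2 * r + 1), p (2 * r + 2))} := by
  have hne : head s(p (2 * r + 1), p (2 * r + 2)) ≠ p (2 * r + 1) := by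
    rw [hhead]; exact (hp.adj (2 * r + 1) (by omega)).ne.symm
  have hval := additiveValuation_eq_zero_of_subset_singleton (G := G)
    (hp.bundleSet_subset_left h (i := 2 * r) (by omega) hne) (hw.zero_right r hr)
  have := h.bundleSet_subset_singleton_of_lt
    ⟨hp.edge_mem (i := 2 * r + 1) (by omega), Sym2.mem_mk_left _ _⟩
    (by rw [hval, hw.poor r hr]; norm_num)
  rwa [hhead] at this

lemma bundleSet_poor_subset (hr : r ≤ k)
    (hhead : head s(p (2 * r + 1), p (2 * r + 2)) = p (2 * r + 1))
    (hlt : additiveValuation G w (p (2 * r + 2)) (bundleSet G head (p (2 * r + 2))) < 2) :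
    bundleSet G head (p (2 * r + 1)) ⊆ {s(p (2 * r + 1), p (2 * r + 2))} := by
  have := h.bundleSet_subset_singleton_of_lt
    ⟨hp.edge_mem (i := 2 * r + 1) (by omega), Sym2.mem_mk_right _ _⟩
    (by rw [hw.rich r hr]; exact_mod_cast hlt)
  rwa [hhead] at this

lemma value_rich_eq_zero (hr : r < k)
    (hhead : head s(p (2 * r + 1), p (2 * r + 2)) = p (2 * r + 1)) :
    additiveValuation G w (p (2 * r + 2)) (bundleSet G head (p (2 * r + 2))) = 0 :=
  additiveValuation_eq_zero_of_subset_singleton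
    (hp.bundleSet_subset_right h (i := 2 * r + 1) (by omega)
      (by rw [hhead]; exact (hp.adj (2 * r + 1) (by omega)).ne))
    (hw.zero_left (r + 1) hr)

/-- An even edge pointing forward pushes every later even edge forward, which at the end
contradicts the two conditions on the last vertex. -/
lemma head_even_edge_ne
    (hlast : ¬ bundleSet G head (p (2 * k + 2)) ⊆ {s(p (2 * k + 1), p (2 * k + 2))})
    (hval : head s(p (2 * k + 1), p (2 * k + 2)) = p (2 * k + 1) →
      additiveValuation G w (p (2 * k + 2)) (bundleSet G head (p (2 * k + 2))) < 2)
    (hr : r ≤ k) : head s(p (2 * r), p (2 * r + 1)) ≠ p (2 * r + 1) := by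
  have step : ∀ r ≤ k, head s(p (2 * r), p (2 * r + 1)) = p (2 * r + 1) →
      (head s(p (2 * r + 1), p (2 * r + 2)) = p (2 * r + 1) →
        additiveValuation G w (p (2 * r + 2)) (bundleSet G head (p (2 * r + 2))) < 2) →
      bundleSet G head (p (2 * r + 2)) ⊆ {s(p (2 * r + 1), p (2 * r + 2))} := by
    intro r hr hfwd hlt
    rcases hp.head_eq_or h (i := 2 * r + 1) (by omega) with hb | hb
    · have := hp.head_eq_left h (i := 2 * r) (by omega)
        (hw.bundleSet_poor_subset hp h hr hb (hlt hb))
      exact absurd (this.symm.trans hfwd) (hp.adj (2 * r) (by omega)).ne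
    · exact hw.bundleSet_rich_subset hp h hr hb
  suffices ∀ d r, r + d = k → head s(p (2 * r), p (2 * r + 1)) ≠ p (2 * r + 1) from
    this (k - r) r (by omega)
  intro d
  induction d with
  | zero =>
    intro r hrk hfwd
    obtain rfl : r = k := by omega
    exact hlast (step r le_rfl hfwd hval)
  | succ d ih =>
    intro r hrk hfwd
    have hB := step r (by omega) hfwd fun hb => by
      rw [hw.value_rich_eq_zero hp h (by omega) hb]; norm_num
    exact ih (r + 1) (by omega) (hp.head_eq_right h (i := 2 * r + 1) (by omega) hB)

/-- A poor vertex holding only its weighted edge forces the previous poor vertex to do the same,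
down to the first edge, which must then point backward. -/
lemma head_first_edge_eq (hr : r ≤ k)
    (hB : bundleSet G head (p (2 * r + 1)) ⊆ {s(p (2 * r + 1), p (2 * r + 2))}) :
    head s(p 0, p 1) = p 0 := by
  induction r with
  | zero => exact hp.head_eq_left h (i := 0) (by omega) hB
  | succ r ih =>
    have hback : head s(p (2 * r + 2), p (2 * r + 3)) = p (2 * r + 2) :=
      hp.head_eq_left h (i := 2 * r + 2) (by omega) hB
    apply ih (by omega)
    rcases hp.head_eq_or h (i := 2 * r + 1) (by omega) with hb | hb
    · exact hw.bundleSet_poor_subset hp h (by omega) hb (by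
        rw [hw.value_rich_eq_zero hp h (by omega) hb]; norm_num)
    · refine absurd (hp.head_eq_right h (i := 2 * r + 1) (by omega)
        (hw.bundleSet_rich_subset hp h (by omega) hb)) ?_
      rw [hback]
      exact (hp.adj (2 * r + 2) (by omega)).ne

end IsAlternating

def pathEdges (p : ℕ → V) (L : ℕ) : Set (Sym2 V) :=
  (fun i => s(p i, p (i + 1))) '' Set.Iio L

lemma eq_or_eq_succ_of_mem_edge {p : ℕ → V} {L i j : ℕ} (hp : Set.InjOn p (Set.Iic L))
    (hi : i ≤ L) (hj : j < L) (h : p i ∈ s(p j, p (j + 1))) : i = j ∨ i = j + 1 := by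
  have hmem : ∀ n ≤ L, n ∈ Set.Iic L := fun n hn => hn
  rcases Sym2.mem_iff.1 h with h | h
  · exact Or.inl (hp (hmem i hi) (hmem j hj.le) h)
  · exact Or.inr (hp (hmem i hi) (hmem (j + 1) hj) h)

lemma not_isDiag_of_mem_pathEdges {p : ℕ → V} {L : ℕ} (hp : Set.InjOn p (Set.Iic L))
    {e : Sym2 V} (he : e ∈ pathEdges p L) : ¬ e.IsDiag := by
  obtain ⟨i, hi, rfl⟩ := he
  rw [Sym2.mk_isDiag_iff]
  intro h
  have := hp (show i ∈ Set.Iic L from (Set.mem_Iio.1 hi).le) (show i + 1 ∈ Set.Iic L from hi) h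
  omega

structure IsTheta (G : SimpleGraph V) (a b : V) (p q : ℕ → V) (L₁ L₂ : ℕ) : Prop where
  injOn_p : Set.InjOn p (Set.Iic L₁)
  injOn_q : Set.InjOn q (Set.Iic L₂)
  p_zero : p 0 = a
  p_last : p L₁ = b
  q_zero : q 0 = b
  q_last : q L₂ = a
  inter_subset : p '' Set.Iic L₁ ∩ q '' Set.Iic L₂ ⊆ {a, b}
  edgeSet_eq : G.edgeSet = insert s(a, b) (pathEdges p L₁ ∪ pathEdges q L₂)

namespace IsTheta

variable {G : SimpleGraph V} {a b : V} {p q : ℕ → V} {L₁ L₂ i : ℕ}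

lemma symm (hθ : IsTheta G a b p q L₁ L₂) : IsTheta G b a q p L₂ L₁ where
  injOn_p := hθ.injOn_q
  injOn_q := hθ.injOn_p
  p_zero := hθ.q_zero
  p_last := hθ.q_last
  q_zero := hθ.p_zero
  q_last := hθ.p_last
  inter_subset := by rw [Set.inter_comm, Set.pair_comm]; exact hθ.inter_subset
  edgeSet_eq := by rw [hθ.edgeSet_eq, Sym2.eq_swap, Set.union_comm]

lemma chord_mem (hθ : IsTheta G a b p q L₁ L₂) : s(a, b) ∈ G.edgeSet :=
  hθ.edgeSet_eq ▸ Set.mem_insert _ _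

lemma ne (hθ : IsTheta G a b p q L₁ L₂) (hL : 0 < L₁) : a ≠ b := fun hab => by
  have := hθ.injOn_p (Nat.zero_le L₁) Set.self_mem_Iic
    (hθ.p_zero.trans (hab.trans hθ.p_last.symm))
  omega

lemma inner_not_mem (hθ : IsTheta G a b p q L₁ L₂) (hi : 0 < i) (hi' : i < L₁) :
    p i ∉ q '' Set.Iic L₂ := by
  intro hq
  have hi'' : i ∈ Set.Iic L₁ := hi'.le
  rcases hθ.inter_subset ⟨⟨i, hi'', rfl⟩, hq⟩ with h | h
  · have := hθ.injOn_p hi'' (Nat.zero_le _) (h.trans hθ.p_zero.symm)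
    omega
  · have := hθ.injOn_p hi'' Set.self_mem_Iic (h.trans hθ.p_last.symm)
    omega

lemma inner_not_mem_chord (hθ : IsTheta G a b p q L₁ L₂) (hi : 0 < i) (hi' : i < L₁) :
    p i ∉ s(a, b) := by
  rw [Sym2.mem_iff]
  rintro (h | h)
  · exact hθ.inner_not_mem hi hi' ⟨L₂, Set.self_mem_Iic, hθ.q_last.trans h.symm⟩
  · exact hθ.inner_not_mem hi hi' ⟨0, Nat.zero_le _, hθ.q_zero.trans h.symm⟩

lemma edge_ne_chord (hθ : IsTheta G a b p q L₁ L₂) (hi : 0 < i) (hi' : i < L₁) {e : Sym2 V}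
    (he : p i ∈ e) : e ≠ s(a, b) :=
  fun h => hθ.inner_not_mem_chord hi hi' (h ▸ he)

lemma inner_not_mem_edge (hθ : IsTheta G a b p q L₁ L₂) (hi : 0 < i) (hi' : i < L₁) {j : ℕ}
    (hj : j < L₂) : p i ∉ s(q j, q (j + 1)) := by
  rw [Sym2.mem_iff]
  rintro (h | h)
  · exact hθ.inner_not_mem hi hi' ⟨j, Set.mem_Iic.2 hj.le, h.symm⟩
  · exact hθ.inner_not_mem hi hi' ⟨j + 1, Set.mem_Iic.2 hj, h.symm⟩

lemma isThread_p (hθ : IsTheta G a b p q L₁ L₂) : IsThread G p L₁ where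
  injOn := hθ.injOn_p
  adj i hi := by
    rw [← SimpleGraph.mem_edgeSet, hθ.edgeSet_eq]
    exact Or.inr (Or.inl ⟨i, hi, rfl⟩)
  incidenceSet_subset i hi e he := by
    obtain ⟨he, hmem⟩ := he
    rw [hθ.edgeSet_eq] at he
    rcases he with rfl | ⟨j, hj, rfl⟩ | ⟨j, hj, rfl⟩
    · exact absurd hmem (hθ.inner_not_mem_chord (by omega) hi)
    · rcases eq_or_eq_succ_of_mem_edge hθ.injOn_p hi.le hj hmem with rfl | h
      · exact Or.inr rfl
      · obtain rfl : j = i := by omega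
        exact Or.inl rfl
    · exact absurd hmem (hθ.inner_not_mem_edge (by omega) hi hj)

lemma incidenceSet_subset (hθ : IsTheta G a b p q (L₁ + 1) L₂) :
    G.incidenceSet b ⊆ {s(a, b), s(p L₁, p (L₁ + 1)), s(q 0, q 1)} := by
  rintro e ⟨he, hmem⟩
  rw [hθ.edgeSet_eq] at he
  rcases he with rfl | ⟨j, hj : j < L₁ + 1, rfl⟩ | ⟨j, hj : j < L₂, rfl⟩
  · exact Or.inl rfl
  · rw [← hθ.p_last] at hmem
    rcases eq_or_eq_succ_of_mem_edge hθ.injOn_p le_rfl hj hmem with h | h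
    · omega
    · obtain rfl : j = L₁ := by omega
      exact Or.inr (Or.inl rfl)
  · rw [← hθ.q_zero] at hmem
    rcases eq_or_eq_succ_of_mem_edge hθ.injOn_q (Nat.zero_le _) hj hmem with rfl | h
    · exact Or.inr (Or.inr rfl)
    · omega

variable [Fintype V] {k l : ℕ} {w : V → Sym2 V → ℕ} {head : Sym2 V → V}

lemma head_last_edge_ne_inner (hθ : IsTheta G a b p q (2 * k + 2) (2 * l + 2))
    (hwp : IsAlternating w p k) (hwq : IsAlternating w q l) (hwa : w a s(a, b) = 1)
    (h : IsEFXOrientation G (additiveValuation G w) head) (hhead : head s(a, b) = b) :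
    head s(q (2 * l + 1), q (2 * l + 2)) ≠ q (2 * l + 1) := by
  intro hF
  have hq := hθ.symm.isThread_p
  have hBa : bundleSet G head a ⊆ {s(p 0, p 1)} := by
    intro e he
    rcases hθ.symm.incidenceSet_subset (h.bundleSet_subset_incidenceSet a he)
      with rfl | rfl | rfl
    · have := he.2
      rw [Sym2.eq_swap, hhead] at this
      exact absurd this (hθ.ne (by omega)).symm
    · exact absurd (hF.symm.trans (he.2.trans hθ.q_last.symm)) (hq.adj _ (by omega)).ne
    · rfl
  have hva := additiveValuation_eq_zero_of_subset_singleton (G := G) hBa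
    (by simpa [hθ.p_zero] using hwp.zero_left 0 (Nat.zero_le _))
  have hBb : bundleSet G head b ⊆ {s(a, b)} := by
    have := h.bundleSet_subset_singleton_of_lt ⟨hθ.chord_mem, Sym2.mem_mk_left _ _⟩
      (by rw [hva, hwa]; norm_num)
    rwa [hhead] at this
  have hwF : w a s(q (2 * l + 1), q (2 * l + 2)) = 2 := by
    simpa only [hθ.q_last] using hwq.rich l le_rfl
  have hBq : bundleSet G head (q (2 * l + 1)) ⊆ {s(q (2 * l + 1), q (2 * l + 2))} := by
    have := h.bundleSet_subset_singleton_of_lt (x := a)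
      ⟨hq.edge_mem (i := 2 * l + 1) (by omega),
        by rw [← hθ.q_last]; exact Sym2.mem_mk_right _ _⟩
      (by rw [hva, hwF]; norm_num)
    rwa [hF] at this
  have hq₀ := hwq.head_first_edge_eq hq h le_rfl hBq
  exact hθ.symm.edge_ne_chord (i := 1) (by omega) (by omega) (Sym2.mem_mk_right (q 0) _)
    ((hBb ⟨hq.edge_mem (i := 0) (by omega), hq₀.trans hθ.q_zero⟩).trans Sym2.eq_swap)

lemma head_last_edge_ne_end (hθ : IsTheta G a b p q (2 * k + 2) (2 * l + 2))
    (hwp : IsAlternating w p k) (hwq : IsAlternating w q l) (hwb : w b s(a, b) = 1)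
    (h : IsEFXOrientation G (additiveValuation G w) head) (hhead : head s(a, b) = b) :
    head s(q (2 * l + 1), q (2 * l + 2)) ≠ q (2 * l + 2) := by
  intro hF
  have hp := hθ.isThread_p
  have hq := hθ.symm.isThread_p
  have hBa : bundleSet G head a ⊆ {s(q (2 * l + 1), q (2 * l + 2))} := by
    simpa only [hθ.q_last] using hwq.bundleSet_rich_subset hq h le_rfl hF
  have hE₀ : head s(p 0, p 1) = p 1 := by
    refine (hp.head_eq_or h (i := 0) (by omega)).resolve_left fun h₀ => ?_
    have heq := hBa ⟨hp.edge_mem (i := 0) (by omega), h₀.trans hθ.p_zero⟩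
    exact hθ.inner_not_mem_edge (i := 1) (by omega) (by omega) (j := 2 * l + 1) (by omega)
      (heq ▸ Sym2.mem_mk_right _ _)
  refine hwp.head_even_edge_ne hp h (fun hsub => ?_) (fun hlast => ?_) (r := 0) (Nat.zero_le k)
    hE₀
  · have hg : s(a, b) ∈ bundleSet G head (p (2 * k + 2)) :=
      ⟨hθ.chord_mem, hhead.trans hθ.p_last.symm⟩
    have := hsub hg
    exact hθ.edge_ne_chord (i := 2 * k + 1) (by omega) (by omega) (Sym2.mem_mk_left _ _) this.symm
  · have hq₁ : s(q 0, q 1) ≠ s(a, b) := fun heq => hθ.symm.edge_ne_chord (i := 1) (by omega)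
      (by omega) (Sym2.mem_mk_right (q 0) _) (heq.trans Sym2.eq_swap)
    have hBb : bundleSet G head b ⊆ ({s(a, b), s(q 0, q 1)} : Finset (Sym2 V)) := by
      intro e he
      rcases hθ.incidenceSet_subset (h.bundleSet_subset_incidenceSet b he)
        with rfl | rfl | rfl
      · simp
      · exact absurd (hlast.symm.trans (he.2.trans hθ.p_last.symm)) (hp.adj _ (by omega)).ne
      · simp
    rw [hθ.p_last]
    calc additiveValuation G w b (bundleSet G head b)
        ≤ ∑ e ∈ {s(a, b), s(q 0, q 1)}, (w b e : NNReal) := additiveValuation_le_sum _ hBb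
      _ = 1 := by
        rw [Finset.sum_pair hq₁.symm, hwb]
        simpa [hθ.q_zero] using hwq.zero_left 0 (Nat.zero_le _)
      _ < 2 := by norm_num

lemma head_chord_ne (hθ : IsTheta G a b p q (2 * k + 2) (2 * l + 2))
    (hwp : IsAlternating w p k) (hwq : IsAlternating w q l)
    (hwa : w a s(a, b) = 1) (hwb : w b s(a, b) = 1)
    (h : IsEFXOrientation G (additiveValuation G w) head) : head s(a, b) ≠ b := fun hhead =>
  (hθ.symm.isThread_p.head_eq_or h (i := 2 * l + 1) (by omega)).elim
    (hθ.head_last_edge_ne_inner hwp hwq hwa h hhead)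
    (hθ.head_last_edge_ne_end hwp hwq hwb h hhead)

end IsTheta

noncomputable def threadWeight (p : ℕ → V) (k : ℕ) (x : V) (e : Sym2 V) : ℕ :=
  (if ∃ r ≤ k, x = p (2 * r + 1) ∧ e = s(p (2 * r + 1), p (2 * r + 2)) then 1 else 0) +
  (if ∃ r ≤ k, x = p (2 * r + 2) ∧ e = s(p (2 * r + 1), p (2 * r + 2)) then 2 else 0)

section ThreadWeight

variable {p : ℕ → V} {k r : ℕ} {x : V} {e : Sym2 V}

lemma threadWeight_eq_zero (hx : ∀ i, 0 < i → i ≤ 2 * k + 2 → x ≠ p i) :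
    threadWeight p k x e = 0 := by
  unfold threadWeight
  rw [if_neg, if_neg]
  · rintro ⟨r, hr, hxr, -⟩
    exact hx _ (by omega) (by omega) hxr
  · rintro ⟨r, hr, hxr, -⟩
    exact hx _ (by omega) (by omega) hxr

variable (hp : Set.InjOn p (Set.Iic (2 * k + 2))) (hr : r ≤ k)
include hp hr

lemma threadWeight_poor :
    threadWeight p k (p (2 * r + 1)) e = if e = s(p (2 * r + 1), p (2 * r + 2)) then 1 else 0 := by
  have h₁ : (∃ r' ≤ k, p (2 * r + 1) = p (2 * r' + 1) ∧
      e = s(p (2 * r' + 1), p (2 * r' + 2))) ↔ e = s(p (2 * r + 1), p (2 * r + 2)) := by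
    refine ⟨?_, fun he => ⟨r, hr, rfl, he⟩⟩
    rintro ⟨r', hr', hx, rfl⟩
    obtain rfl : r = r' := by
      have := hp (Set.mem_Iic.2 (by omega)) (Set.mem_Iic.2 (by omega)) hx
      omega
    rfl
  have h₂ : ¬ ∃ r' ≤ k, p (2 * r + 1) = p (2 * r' + 2) ∧
      e = s(p (2 * r' + 1), p (2 * r' + 2)) := by
    rintro ⟨r', hr', hx, -⟩
    have := hp (Set.mem_Iic.2 (by omega)) (Set.mem_Iic.2 (by omega)) hx
    omega
  simp only [threadWeight, h₁, h₂, if_false, add_zero]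

lemma threadWeight_rich :
    threadWeight p k (p (2 * r + 2)) e = if e = s(p (2 * r + 1), p (2 * r + 2)) then 2 else 0 := by
  have h₁ : ¬ ∃ r' ≤ k, p (2 * r + 2) = p (2 * r' + 1) ∧
      e = s(p (2 * r' + 1), p (2 * r' + 2)) := by
    rintro ⟨r', hr', hx, -⟩
    have := hp (Set.mem_Iic.2 (by omega)) (Set.mem_Iic.2 (by omega)) hx
    omega
  have h₂ : (∃ r' ≤ k, p (2 * r + 2) = p (2 * r' + 2) ∧
      e = s(p (2 * r' + 1), p (2 * r' + 2))) ↔ e = s(p (2 * r + 1), p (2 * r + 2)) := by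
    refine ⟨?_, fun he => ⟨r, hr, rfl, he⟩⟩
    rintro ⟨r', hr', hx, rfl⟩
    obtain rfl : r = r' := by
      have := hp (Set.mem_Iic.2 (by omega)) (Set.mem_Iic.2 (by omega)) hx
      omega
    rfl
  simp only [threadWeight, h₁, h₂, if_false, zero_add]

end ThreadWeight

noncomputable def thetaWeight (a b : V) (p q : ℕ → V) (k l : ℕ) (x : V) (e : Sym2 V) : ℕ :=
  (if x ∈ s(a, b) ∧ e = s(a, b) then 1 else 0) + threadWeight p k x e + threadWeight q l x e

lemma thetaWeight_comm (a b : V) (p q : ℕ → V) (k l : ℕ) :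
    thetaWeight b a q p l k = thetaWeight a b p q k l := by
  funext x e
  simp only [thetaWeight, Sym2.eq_swap (a := b) (b := a)]
  ring

namespace IsTheta

variable {G : SimpleGraph V} {a b : V} {p q : ℕ → V} {k l i : ℕ} {e : Sym2 V}
  (hθ : IsTheta G a b p q (2 * k + 2) (2 * l + 2))
include hθ

lemma thetaWeight_eq (hi : 0 < i) (hi' : i ≤ 2 * k + 2) (he : e ≠ s(a, b)) :
    thetaWeight a b p q k l (p i) e = threadWeight p k (p i) e := by
  have hq : threadWeight q l (p i) e = 0 := threadWeight_eq_zero fun j hj hj' hpq => by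
    rcases hi'.lt_or_eq with hi'' | rfl
    · exact hθ.inner_not_mem hi hi'' ⟨j, Set.mem_Iic.2 hj', hpq.symm⟩
    · have := hθ.injOn_q (Set.mem_Iic.2 hj') (Set.mem_Iic.2 (Nat.zero_le _))
        (hpq.symm.trans (hθ.p_last.trans hθ.q_zero.symm))
      omega
  simp only [thetaWeight, he, and_false, if_false, zero_add, hq, add_zero]

lemma isAlternating : IsAlternating (thetaWeight a b p q k l) p k where
  poor r hr := by
    rw [hθ.thetaWeight_eq (by omega) (by omega) (hθ.edge_ne_chord (i := 2 * r + 1) (by omega)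
      (by omega) (Sym2.mem_mk_left _ _)), threadWeight_poor hθ.injOn_p hr, if_pos rfl]
  rich r hr := by
    rw [hθ.thetaWeight_eq (by omega) (by omega) (hθ.edge_ne_chord (i := 2 * r + 1) (by omega)
      (by omega) (Sym2.mem_mk_left _ _)), threadWeight_rich hθ.injOn_p hr, if_pos rfl]
  zero_left r hr := by
    rcases r with _ | r
    · -- `p 0 = a = q (2l+2)` is the rich end of the last edge of `q`
      have hchord : s(p 0, p 1) ≠ s(b, a) := by
        rw [Sym2.eq_swap (a := b)]
        exact hθ.edge_ne_chord (i := 1) (by omega) (by omega) (Sym2.mem_mk_right _ _)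
      have hF : s(p 0, p 1) ≠ s(q (2 * l + 1), q (2 * l + 2)) := fun h =>
        hθ.inner_not_mem_edge (i := 1) (by omega) (by omega) (j := 2 * l + 1) (by omega)
          (h ▸ Sym2.mem_mk_right _ _)
      have key := hθ.symm.thetaWeight_eq (i := 2 * l + 2) (by omega) le_rfl hchord
      rw [thetaWeight_comm, threadWeight_rich hθ.injOn_q le_rfl, if_neg hF] at key
      simpa [hθ.q_last, hθ.p_zero] using key
    · have hne := hθ.isThread_p.edge_ne (i := 2 * r + 1) (by omega)
      rw [show 2 * (r + 1) = 2 * r + 2 by ring, hθ.thetaWeight_eq (by omega) (by omega)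
        (hθ.edge_ne_chord (i := 2 * r + 3) (by omega) (by omega) (Sym2.mem_mk_right _ _)),
        threadWeight_rich hθ.injOn_p (by omega), if_neg hne.symm]
  zero_right r hr := by
    rw [hθ.thetaWeight_eq (by omega) (by omega) (hθ.edge_ne_chord (i := 2 * r + 1) (by omega)
      (by omega) (Sym2.mem_mk_right _ _)), threadWeight_poor hθ.injOn_p hr,
      if_neg (hθ.isThread_p.edge_ne (by omega))]

lemma thetaWeight_chord : thetaWeight a b p q k l b s(a, b) = 1 := by
  have hp := threadWeight_rich hθ.injOn_p (le_refl k) (e := s(a, b))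
  rw [hθ.p_last, if_neg (hθ.edge_ne_chord (i := 2 * k + 1) (by omega) (by omega)
    (Sym2.mem_mk_left _ _)).symm] at hp
  have hq : threadWeight q l b s(a, b) = 0 := threadWeight_eq_zero fun j hj hj' hbq => by
    have := hθ.injOn_q (Set.mem_Iic.2 (Nat.zero_le _)) (Set.mem_Iic.2 hj')
      (hθ.q_zero.trans hbq)
    omega
  simp only [thetaWeight, Sym2.mem_mk_right, and_self, if_true, hp, hq]

end IsTheta

theorem IsTheta.not_stronglyEFXOrientable [Fintype V] {G : SimpleGraph V} {a b : V}
    {p q : ℕ → V} {k l : ℕ} (hθ : IsTheta G a b p q (2 * k + 2) (2 * l + 2)) :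
    ¬ StronglyEFXOrientable G := by
  intro hS
  obtain ⟨head, h⟩ := hS (additiveValuation G (thetaWeight a b p q k l)) additiveValuation_mono
    additiveValuation_inter_incidenceSet
  have hwq : IsAlternating (thetaWeight a b p q k l) q l :=
    thetaWeight_comm a b p q k l ▸ hθ.symm.isAlternating
  have hwa : thetaWeight a b p q k l a s(b, a) = 1 :=
    thetaWeight_comm a b p q k l ▸ hθ.symm.thetaWeight_chord
  have hwb := hθ.thetaWeight_chord
  rcases Sym2.mem_iff.1 (h.1 _ hθ.chord_mem) with hhead | hhead
  · rw [Sym2.eq_swap] at hwb hhead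
    exact hθ.symm.head_chord_ne hwq hθ.isAlternating hwb hwa h hhead
  · rw [Sym2.eq_swap] at hwa
    exact hθ.head_chord_ne hθ.isAlternating hwq hwa hwb h hhead

lemma cycleEdges_comp_neg {n : ℕ} (c : ZMod n → V) :
    cycleEdges (fun i => c (-i)) = cycleEdges c := by
  ext e
  constructor
  · rintro ⟨i, rfl⟩
    refine ⟨-i - 1, ?_⟩
    dsimp only
    rw [sub_add_cancel, neg_add', Sym2.eq_swap]
  · rintro ⟨i, rfl⟩
    refine ⟨-i - 1, ?_⟩
    dsimp only
    rw [show -(-i - 1) = i + 1 by ring, show -(-i - 1 + 1) = i by ring, Sym2.eq_swap]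

lemma exists_path_of_apply_eq {L : ℕ} {c : ZMod (L + 1) → V} (hc : Function.Injective c)
    {x y : V} {t : ZMod (L + 1)} (hx : c (t + 1) = x) (hy : c t = y) :
    ∃ p : ℕ → V, p 0 = x ∧ p L = y ∧ Set.InjOn p (Set.Iic L) ∧
      Set.range c = p '' Set.Iic L ∧ cycleEdges c = insert s(x, y) (pathEdges p L) := by
  have hL : ((L : ℕ) : ZMod (L + 1)) = -1 :=
    eq_neg_of_add_eq_zero_left (by exact_mod_cast ZMod.natCast_self (L + 1))
  have hsurj : ∀ z : ZMod (L + 1), ∃ i ≤ L, t + 1 + i = z := fun z =>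
    ⟨(z - (t + 1)).val, Nat.lt_succ_iff.1 (ZMod.val_lt _), by rw [ZMod.natCast_zmod_val]; ring⟩
  refine ⟨fun i => c (t + 1 + i), by simpa using hx, by simp [hL, hy], ?_, ?_, ?_⟩
  · intro i hi j hj hij
    have := add_left_cancel (hc hij)
    rwa [ZMod.natCast_eq_natCast_iff', Nat.mod_eq_of_lt (Nat.lt_succ_of_le hi),
      Nat.mod_eq_of_lt (Nat.lt_succ_of_le hj)] at this
  · ext z
    constructor
    · rintro ⟨z, rfl⟩
      obtain ⟨i, hi, rfl⟩ := hsurj z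
      exact ⟨i, hi, rfl⟩
    · rintro ⟨i, -, rfl⟩
      exact ⟨_, rfl⟩
  · ext e
    constructor
    · rintro ⟨z, rfl⟩
      obtain ⟨i, hi, rfl⟩ := hsurj z
      rcases hi.lt_or_eq with hi | rfl
      · exact Or.inr ⟨i, hi, by simp only [Nat.cast_succ, add_assoc]⟩
      · left
        dsimp only
        rw [hL, show t + 1 + -1 = t by ring, hx, hy, Sym2.eq_swap]
    · rintro (rfl | ⟨i, -, rfl⟩)
      · exact ⟨t, by dsimp only; rw [hx, hy, Sym2.eq_swap]⟩
      · exact ⟨t + 1 + i, by simp only [Nat.cast_succ, add_assoc]⟩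

lemma exists_path_of_mem_cycleEdges {L : ℕ} {c : ZMod (L + 1) → V} (hc : Function.Injective c)
    {x y : V} (h : s(x, y) ∈ cycleEdges c) :
    ∃ p : ℕ → V, p 0 = x ∧ p L = y ∧ Set.InjOn p (Set.Iic L) ∧
      Set.range c = p '' Set.Iic L ∧ cycleEdges c = insert s(x, y) (pathEdges p L) := by
  obtain ⟨t, ht⟩ := h
  rcases Sym2.eq_iff.1 ht with ⟨hx, hy⟩ | ⟨hy, hx⟩
  · -- the cycle runs from `x` to `y` here, so read it backwards
    have hrev := exists_path_of_apply_eq (c := fun i => c (-i)) (hc.comp neg_injective)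
      (t := -t - 1) (by simpa using hx) (by simpa [add_comm] using hy)
    rwa [cycleEdges_comp_neg, show Set.range (fun i => c (-i)) = Set.range c from
      neg_surjective.range_comp c] at hrev
  · exact exists_path_of_apply_eq hc hx hy

/-- The union of two odd cycles whose intersection is exactly one edge
(they share exactly two vertices, which are adjacent, together with the edge between them)
is not strongly EFX-orientable. -/
theorem not_stronglyEFXOrientable_oddCycles_sharing_edge [Fintype V] (G : SimpleGraph V)
    (m n : ℕ) (hm : Odd m) (hm3 : 3 ≤ m) (hn : Odd n) (hn3 : 3 ≤ n)
    (c₁ : ZMod m → V) (c₂ : ZMod n → V)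
    (hc₁ : Function.Injective c₁) (hc₂ : Function.Injective c₂)
    (a b : V) (hab : a ≠ b)
    (hvert : Set.range c₁ ∩ Set.range c₂ = {a, b})
    (hedge : cycleEdges c₁ ∩ cycleEdges c₂ = {s(a, b)})
    (hG : G = SimpleGraph.fromEdgeSet (cycleEdges c₁ ∪ cycleEdges c₂)) :
    ¬ StronglyEFXOrientable G := by
  obtain ⟨k, rfl⟩ : ∃ k, m = 2 * k + 2 + 1 := by
    obtain ⟨M, rfl⟩ := hm
    exact ⟨M - 1, by omega⟩
  obtain ⟨l, rfl⟩ : ∃ l, n = 2 * l + 2 + 1 := by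
    obtain ⟨N, rfl⟩ := hn
    exact ⟨N - 1, by omega⟩
  have hchord : s(a, b) ∈ cycleEdges c₁ ∩ cycleEdges c₂ := hedge ▸ rfl
  obtain ⟨p, hp₀, hpL, hp, hrange₁, hedges₁⟩ :=
    exists_path_of_mem_cycleEdges hc₁ hchord.1
  obtain ⟨q, hq₀, hqL, hq, hrange₂, hedges₂⟩ :=
    exists_path_of_mem_cycleEdges hc₂ (Sym2.eq_swap (a := a) ▸ hchord.2)
  refine IsTheta.not_stronglyEFXOrientable (k := k) (l := l)
    ⟨hp, hq, hp₀, hpL, hq₀, hqL, by rw [← hrange₁, ← hrange₂, hvert], ?_⟩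
  rw [hG, SimpleGraph.edgeSet_fromEdgeSet, hedges₁, hedges₂, Sym2.eq_swap (a := b),
    ← Set.insert_union_distrib]
  refine sdiff_eq_left.2 (Set.disjoint_left.2 ?_)
  rintro e (rfl | he | he)
  · exact Sym2.mk_isDiag_iff.not.2 hab
  · exact not_isDiag_of_mem_pathEdges hp he
  · exact not_isDiag_of_mem_pathEdges hq he
end
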